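/- arXiv:1210.6965 — 5 statements merged into one kernel-verified Lean document; each statement's English description precedes it below -/
import Mathlib

section
/- For a graph G with maximum degree Δ, lcc(G) = Δ if and only if there exists a vertex x of degree Δ whose neighbourhood N(x) is an independent set. -/
open SimpleGraph Finset

/-- A clique covering of `G`: a family of cliques covering every edge. -/
def IsCliqueCover {V : Type*} [DecidableEq V] (G : SimpleGraph V)
    (C : Finset (Finset V)) : Prop :=
  (∀ s ∈ C, G.IsClique (s : Set V)) ∧ ∀ u v : V, G.Adj u v → ∃ s ∈ C, u ∈ s ∧ v ∈ s

/-- The local clique cover number: the least `k` such that `G` has a clique covering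
in which every vertex lies in at most `k` cliques. -/
noncomputable def lcc {V : Type*} [DecidableEq V] (G : SimpleGraph V) : ℕ :=
  sInf {k | ∃ C : Finset (Finset V), IsCliqueCover G C ∧
    ∀ x : V, (C.filter (fun s => x ∈ s)).card ≤ k}

set_option linter.unusedSectionVars false
set_option linter.unusedVariables false

section Aux
variable {V : Type*} [Fintype V] [DecidableEq V] [LinearOrder V]
variable (G : SimpleGraph V) [DecidableRel G.Adj]

def cand1 (v : V) : Finset V :=
  (G.neighborFinset v).filter (fun a => ∃ b ∈ G.neighborFinset v, a < b ∧ G.Adj a b)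

noncomputable def yvx (v : V) : V :=
  if h : (cand1 G v).Nonempty then (cand1 G v).min' h else v

noncomputable def cand2 (v : V) : Finset V :=
  (G.neighborFinset v).filter (fun b => yvx G v < b ∧ G.Adj (yvx G v) b)

noncomputable def zvx (v : V) : V :=
  if h : (cand2 G v).Nonempty then (cand2 G v).min' h else v

variable {G}

lemma yv_mem {v : V} (hv : (cand1 G v).Nonempty) : yvx G v ∈ cand1 G v := by
  rw [yvx, dif_pos hv]; exact Finset.min'_mem _ _

lemma cand2_ne {v : V} (hv : (cand1 G v).Nonempty) : (cand2 G v).Nonempty := by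
  obtain ⟨hy, b, hb, hlt, hadj⟩ := Finset.mem_filter.1 (yv_mem hv)
  exact ⟨b, Finset.mem_filter.2 ⟨hb, hlt, hadj⟩⟩

lemma zv_mem {v : V} (hv : (cand1 G v).Nonempty) : zvx G v ∈ cand2 G v := by
  rw [zvx, dif_pos (cand2_ne hv)]; exact Finset.min'_mem _ _

lemma yv_adj {v : V} (hv : (cand1 G v).Nonempty) : G.Adj v (yvx G v) :=
  (SimpleGraph.mem_neighborFinset _ _ _).1 (Finset.mem_filter.1 (yv_mem hv)).1

lemma zv_adj {v : V} (hv : (cand1 G v).Nonempty) : G.Adj v (zvx G v) :=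
  (SimpleGraph.mem_neighborFinset _ _ _).1 (Finset.mem_filter.1 (zv_mem hv)).1

lemma yv_lt_zv {v : V} (hv : (cand1 G v).Nonempty) : yvx G v < zvx G v :=
  (Finset.mem_filter.1 (zv_mem hv)).2.1

lemma adj_yz {v : V} (hv : (cand1 G v).Nonempty) : G.Adj (yvx G v) (zvx G v) :=
  (Finset.mem_filter.1 (zv_mem hv)).2.2

lemma yv_min {v a b : V} (hv : (cand1 G v).Nonempty) (ha : G.Adj v a) (hb : G.Adj v b)
    (hlt : a < b) (hadj : G.Adj a b) : yvx G v ≤ a := by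
  rw [yvx, dif_pos hv]
  exact Finset.min'_le _ _ (Finset.mem_filter.2 ⟨(SimpleGraph.mem_neighborFinset _ _ _).2 ha,
    b, (SimpleGraph.mem_neighborFinset _ _ _).2 hb, hlt, hadj⟩)

lemma zv_min {v b : V} (hv : (cand1 G v).Nonempty) (hb : G.Adj v b)
    (hlt : yvx G v < b) (hadj : G.Adj (yvx G v) b) : zvx G v ≤ b := by
  rw [zvx, dif_pos (cand2_ne hv)]
  exact Finset.min'_le _ _ (Finset.mem_filter.2 ⟨(SimpleGraph.mem_neighborFinset _ _ _).2 hb,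
    hlt, hadj⟩)

variable (G) in
noncomputable def gvx (u v : V) : V := if u = yvx G v then zvx G v else yvx G v

lemma gv_min {u v b : V} (hv : (cand1 G v).Nonempty) (hu : u = yvx G v ∨ u = zvx G v)
    (hvb : G.Adj v b) (hub : G.Adj u b) : gvx G u v ≤ b := by
  have hbu : b ≠ u := fun h => G.irrefl (h ▸ hub)
  rcases hu with hu | hu
  · rw [gvx, if_pos hu]
    rcases lt_or_gt_of_ne hbu with hlt | hlt
    · exfalso
      have := yv_min hv hvb (hu ▸ yv_adj hv) hlt hub.symm
      rw [← hu] at this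
      exact absurd hlt (not_lt.2 this)
    · exact zv_min hv hvb (hu ▸ hlt) (hu ▸ hub)
  · have hne : u ≠ yvx G v := by
      intro h
      have := yv_lt_zv hv
      rw [← h, ← hu] at this
      exact lt_irrefl u this
    rw [gvx, if_neg hne]
    rcases lt_or_gt_of_ne hbu with hlt | hlt
    · exact yv_min hv hvb (hu ▸ zv_adj hv) hlt hub.symm
    · calc yvx G v ≤ u := hu ▸ (yv_lt_zv hv).le
        _ ≤ b := hlt.le

variable (G) in
noncomputable def Tvx (v : V) : Finset V := insert v {yvx G v, zvx G v}

variable (G) in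
noncomputable def Mset : Finset (Finset V) :=
  (Finset.univ.filter (fun v => G.degree v = G.maxDegree)).image (Tvx G)

variable (G) in
def allPairs : Finset (Finset V) :=
  ((Finset.univ ×ˢ Finset.univ : Finset (V × V)).filter (fun p => G.Adj p.1 p.2)).image
    (fun p => {p.1, p.2})

variable (G) in
noncomputable def Eset : Finset (Finset V) :=
  (allPairs G).filter (fun s => ¬ ∃ t ∈ Mset G, s ⊆ t)

variable (G) in
noncomputable def Cset : Finset (Finset V) := Mset G ∪ Eset G

variable (G) in
noncomputable def Lset (u : V) : Finset (Finset V) :=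
  ((Mset G).filter (fun t => u ∈ t)).image (fun t => t.erase u)

lemma mem_allPairs {a b : V} (h : G.Adj a b) : ({a, b} : Finset V) ∈ allPairs G := by
  refine Finset.mem_image.2 ⟨(a, b), Finset.mem_filter.2 ⟨?_, h⟩, rfl⟩
  simp

lemma allPairs_shape {s : Finset V} (hs : s ∈ allPairs G) :
    ∃ a b, G.Adj a b ∧ s = {a, b} := by
  obtain ⟨p, hp, rfl⟩ := Finset.mem_image.1 hs
  exact ⟨p.1, p.2, (Finset.mem_filter.1 hp).2, rfl⟩

lemma mem_Mset_iff {t : Finset V} :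
    t ∈ Mset G ↔ ∃ v, G.degree v = G.maxDegree ∧ t = Tvx G v := by
  simp only [Mset, Finset.mem_image, Finset.mem_filter, Finset.mem_univ, true_and]
  constructor
  · rintro ⟨v, hv, rfl⟩; exact ⟨v, hv, rfl⟩
  · rintro ⟨v, hv, rfl⟩; exact ⟨v, hv, rfl⟩

lemma mem_Lset_iff {u : V} {l : Finset V} :
    l ∈ Lset G u ↔ ∃ v, G.degree v = G.maxDegree ∧ u ∈ Tvx G v ∧ l = (Tvx G v).erase u := by
  simp only [Lset, Finset.mem_image, Finset.mem_filter]
  constructor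
  · rintro ⟨t, ⟨ht, hu⟩, rfl⟩
    obtain ⟨v, hv, rfl⟩ := mem_Mset_iff.1 ht
    exact ⟨v, hv, hu, rfl⟩
  · rintro ⟨v, hv, hu, rfl⟩
    exact ⟨Tvx G v, ⟨mem_Mset_iff.2 ⟨v, hv, rfl⟩, hu⟩, rfl⟩

section withHH
variable (HH : ∀ v : V, G.degree v = G.maxDegree → (cand1 G v).Nonempty)

include HH

lemma T_adj {v : V} (dv : G.degree v = G.maxDegree) :
    ∀ a ∈ Tvx G v, ∀ b ∈ Tvx G v, a ≠ b → G.Adj a b := by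
  have hv := HH v dv
  have hy := yv_adj hv
  have hz := zv_adj hv
  have hyz := adj_yz hv
  intro a ha b hb hab
  simp only [Tvx, Finset.mem_insert, Finset.mem_singleton] at ha hb
  rcases ha with rfl | rfl | rfl
  · rcases hb with rfl | rfl | rfl
    · exact absurd rfl hab
    · exact hy
    · exact hz
  · rcases hb with rfl | rfl | rfl
    · exact hy.symm
    · exact absurd rfl hab
    · exact hyz
  · rcases hb with rfl | rfl | rfl
    · exact hz.symm
    · exact hyz.symm
    · exact absurd rfl hab

lemma T_card {v : V} (dv : G.degree v = G.maxDegree) : (Tvx G v).card = 3 := by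
  have hv := HH v dv
  have h1 : yvx G v ≠ zvx G v := (yv_lt_zv hv).ne
  have h2 : v ∉ ({yvx G v, zvx G v} : Finset V) := by
    simp only [Finset.mem_insert, Finset.mem_singleton]
    rintro (h' | h')
    · have := yv_adj hv; rw [← h'] at this; exact G.irrefl this
    · have := zv_adj hv; rw [← h'] at this; exact G.irrefl this
  rw [Tvx, Finset.card_insert_of_notMem h2, Finset.card_insert_of_notMem (by simpa using h1)]
  simp

lemma Mset_card {t : Finset V} (ht : t ∈ Mset G) : t.card = 3 := by
  obtain ⟨v, hv, rfl⟩ := mem_Mset_iff.1 ht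
  exact T_card HH hv

lemma card_of_mem_L {u : V} {l : Finset V} (hl : l ∈ Lset G u) : l.card = 2 := by
  obtain ⟨v, hv, hu, rfl⟩ := mem_Lset_iff.1 hl
  rw [Finset.card_erase_of_mem hu, T_card HH hv]

lemma adj_u_of_mem_L {u : V} {l : Finset V} (hl : l ∈ Lset G u) {a : V} (ha : a ∈ l) :
    G.Adj u a := by
  obtain ⟨v, hv, hu, rfl⟩ := mem_Lset_iff.1 hl
  exact T_adj HH hv u hu a (Finset.mem_of_mem_erase ha) (Finset.ne_of_mem_erase ha).symm

lemma adj_pair_of_mem_L {u : V} {l : Finset V} (hl : l ∈ Lset G u) {a b : V}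
    (ha : a ∈ l) (hb : b ∈ l) (hab : a ≠ b) : G.Adj a b := by
  obtain ⟨v, hv, hu, rfl⟩ := mem_Lset_iff.1 hl
  exact T_adj HH hv a (Finset.mem_of_mem_erase ha) b (Finset.mem_of_mem_erase hb) hab

lemma classify_L {u : V} {l : Finset V} (hl : l ∈ Lset G u) :
    (G.degree u = G.maxDegree ∧ l = {yvx G u, zvx G u}) ∨
    (∃ v, v ≠ u ∧ G.degree v = G.maxDegree ∧ (u = yvx G v ∨ u = zvx G v) ∧
      l = {v, gvx G u v}) := by
  obtain ⟨v, hv, hu, rfl⟩ := mem_Lset_iff.1 hl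
  have h := HH v hv
  have hvy : v ≠ yvx G v := by
    intro h'; have := yv_adj h; rw [← h'] at this; exact G.irrefl this
  have hvz : v ≠ zvx G v := by
    intro h'; have := zv_adj h; rw [← h'] at this; exact G.irrefl this
  by_cases hvu : v = u
  · subst hvu
    left
    refine ⟨hv, ?_⟩
    have hnm : v ∉ ({yvx G v, zvx G v} : Finset V) := by
      simp only [Finset.mem_insert, Finset.mem_singleton]
      rintro (h' | h')
      · exact hvy h'
      · exact hvz h'
    rw [Tvx, Finset.erase_insert hnm]
  · right
    have huyz : u = yvx G v ∨ u = zvx G v := by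
      rcases Finset.mem_insert.1 hu with h' | h'
      · exact absurd h'.symm hvu
      · simpa using h'
    refine ⟨v, hvu, hv, huyz, ?_⟩
    have hyzne : yvx G v ≠ zvx G v := (yv_lt_zv h).ne
    rcases huyz with h' | h'
    · rw [gvx, if_pos h']
      ext a
      simp only [Finset.mem_erase, Tvx, Finset.mem_insert, Finset.mem_singleton]
      constructor
      · rintro ⟨h1, rfl | rfl | rfl⟩
        · exact Or.inl rfl
        · exact absurd h'.symm h1
        · exact Or.inr rfl
      · rintro (rfl | rfl)
        · exact ⟨Ne.symm (Ne.symm hvu), Or.inl rfl⟩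
        · refine ⟨?_, Or.inr (Or.inr rfl)⟩
          rw [h']; exact hyzne.symm
    · have hne : u ≠ yvx G v := by
        intro hh
        have := yv_lt_zv h
        rw [← hh, ← h'] at this
        exact lt_irrefl u this
      rw [gvx, if_neg hne]
      ext a
      simp only [Finset.mem_erase, Tvx, Finset.mem_insert, Finset.mem_singleton]
      constructor
      · rintro ⟨h1, rfl | rfl | rfl⟩
        · exact Or.inl rfl
        · exact Or.inr rfl
        · exact absurd h'.symm h1
      · rintro (rfl | rfl)
        · exact ⟨Ne.symm (Ne.symm hvu), Or.inl rfl⟩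
        · exact ⟨Ne.symm hne, Or.inr (Or.inl rfl)⟩

lemma exists_leaf {u : V} {F : Finset (Finset V)} (hF : F ⊆ Lset G u) (hne : F.Nonempty) :
    ∃ l ∈ F, ∃ x ∈ l, ∀ l' ∈ F, x ∈ l' → l' = l := by
  by_contra hcon
  push_neg at hcon
  have hUadj : ∀ x ∈ F.biUnion id, G.Adj u x := by
    intro x hx
    obtain ⟨l, hl, hx⟩ := Finset.mem_biUnion.1 hx
    exact adj_u_of_mem_L HH (hF hl) hx
  obtain ⟨l0, hl0⟩ := hne
  have hl0card := card_of_mem_L HH (hF hl0)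
  have hUne : (F.biUnion id).Nonempty := by
    obtain ⟨x, hx⟩ := Finset.card_pos.1 (by omega : 0 < l0.card)
    exact ⟨x, Finset.mem_biUnion.2 ⟨l0, hl0, (by exact hx)⟩⟩
  set W := (F.biUnion id).max' hUne with hWdef
  have hWU : W ∈ F.biUnion id := Finset.max'_mem _ hUne
  have hUle : ∀ x ∈ F.biUnion id, x ≤ W := fun x hx => Finset.le_max' _ x hx
  have hmemU : ∀ {l : Finset V}, l ∈ F → ∀ {x : V}, x ∈ l → x ∈ F.biUnion id := by
    intro l hl x hx; exact Finset.mem_biUnion.2 ⟨l, hl, hx⟩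
  have step1 : ∀ l ∈ F, W ∈ l →
      (G.degree u = G.maxDegree ∧ l = {yvx G u, zvx G u}) ∨
      (G.degree W = G.maxDegree ∧ (u = yvx G W ∨ u = zvx G W) ∧ l = {W, gvx G u W}) := by
    intro l hl hWl
    rcases classify_L HH (hF hl) with ⟨du, rfl⟩ | ⟨v, hvu, dv, huv, rfl⟩
    · exact Or.inl ⟨du, rfl⟩
    · by_cases hvW : v = W
      · subst hvW; exact Or.inr ⟨dv, huv, rfl⟩
      · exfalso
        have hWg : gvx G u v = W := by
          rcases Finset.mem_insert.1 hWl with h' | h'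
          · exact absurd h'.symm hvW
          · exact (Finset.mem_singleton.1 h').symm
        obtain ⟨l', hl', hvl', hll⟩ := hcon _ hl v (Finset.mem_insert_self _ _)
        have hl'card := card_of_mem_L HH (hF hl')
        obtain ⟨b, hbl', hbv⟩ : ∃ b ∈ l', b ≠ v := by
          by_contra hb
          push_neg at hb
          have hsub : l' ⊆ {v} := fun x hx => Finset.mem_singleton.2 (hb x hx)
          have := Finset.card_le_card hsub
          simp [hl'card] at this
        have hadjvb : G.Adj v b := (adj_pair_of_mem_L HH (hF hl') hbl' hvl' hbv).symm
        have hadjub : G.Adj u b := adj_u_of_mem_L HH (hF hl') hbl'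
        have hgb : gvx G u v ≤ b := gv_min (HH v dv) huv hadjvb hadjub
        have hbW : b = W := le_antisymm (hUle b (hmemU hl' hbl')) (hWg ▸ hgb)
        have hWv : gvx G u v ≠ v := by rw [hWg]; exact fun h => hvW h.symm
        have hcard2 : ({v, gvx G u v} : Finset V).card = 2 := by
          rw [Finset.card_insert_of_notMem (by simpa using (Ne.symm hWv)),
            Finset.card_singleton]
        have hsub : ({v, gvx G u v} : Finset V) ⊆ l' := by
          intro x hx
          rcases Finset.mem_insert.1 hx with rfl | hx
          · exact hvl'
          · rw [Finset.mem_singleton.1 hx, hWg, ← hbW]; exact hbl'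
        have : ({v, gvx G u v} : Finset V) = l' :=
          Finset.eq_of_subset_of_card_le hsub (by rw [hl'card, hcard2])
        exact hll this.symm
  have key : ∀ la ∈ F, ∀ lb ∈ F, W ∈ lb →
      G.degree u = G.maxDegree → lb = {yvx G u, zvx G u} →
      G.degree W = G.maxDegree → (u = yvx G W ∨ u = zvx G W) → la = {W, gvx G u W} →
      la = lb := by
    intro la hla lb hlb hWlb du hlbA dW huW hlaB
    have hu := HH u du
    have hWv := HH W dW
    have hyU : yvx G u ∈ (F.biUnion id) :=
      hmemU hlb (by rw [hlbA]; exact Finset.mem_insert_self _ _)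
    have hzU : zvx G u ∈ (F.biUnion id) :=
      hmemU hlb (by rw [hlbA]; exact Finset.mem_insert_of_mem (Finset.mem_singleton_self _))
    have hWz : W = zvx G u := by
      rw [hlbA] at hWlb
      rcases Finset.mem_insert.1 hWlb with h' | h'
      · exfalso
        have := hUle _ hzU
        rw [h'] at this
        exact absurd (yv_lt_zv hu) (not_lt.2 this)
      · exact Finset.mem_singleton.1 h'
    have hsW : yvx G u < W := by rw [hWz]; exact yv_lt_zv hu
    have hgla : gvx G u W ∈ la := by
      rw [hlaB]; exact Finset.mem_insert_of_mem (Finset.mem_singleton_self _)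
    have hgU : gvx G u W ∈ F.biUnion id := hmemU hla hgla
    have hgadjW : G.Adj W (gvx G u W) := by
      by_cases h : u = yvx G W
      · rw [gvx, if_pos h]; exact zv_adj hWv
      · rw [gvx, if_neg h]; exact yv_adj hWv
    have hgW : gvx G u W < W := lt_of_le_of_ne (hUle _ hgU) (fun h => G.irrefl (h ▸ hgadjW))
    have hyinlb : yvx G u ∈ lb := by rw [hlbA]; exact Finset.mem_insert_self _ _
    have hWinlb : W ∈ lb := hWlb
    have hadjWs : G.Adj W (yvx G u) :=
      adj_pair_of_mem_L HH (hF hlb) hWinlb hyinlb hsW.ne'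
    have hadjus : G.Adj u (yvx G u) := yv_adj hu
    have h1 : gvx G u W ≤ yvx G u := gv_min hWv huW hadjWs hadjus
    have hadjug : G.Adj u (gvx G u W) := hUadj _ hgU
    have hadjuW : G.Adj u W := hUadj _ hWU
    have h2 : yvx G u ≤ gvx G u W := yv_min hu hadjug hadjuW hgW hgadjW.symm
    have hgs : gvx G u W = yvx G u := le_antisymm h1 h2
    rw [hlaB, hlbA, hgs, hWz, Finset.pair_comm]
  obtain ⟨l1, hl1, hWl1⟩ := Finset.mem_biUnion.1 hWU
  obtain ⟨l2, hl2, hWl2, h12⟩ := hcon _ hl1 W hWl1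
  rcases step1 l1 hl1 hWl1 with ⟨du1, hA1⟩ | ⟨dW1, huW1, hB1⟩
  · rcases step1 l2 hl2 hWl2 with ⟨du2, hA2⟩ | ⟨dW2, huW2, hB2⟩
    · exact h12 (hA2.trans hA1.symm)
    · exact h12 (key l2 hl2 l1 hl1 hWl1 du1 hA1 dW2 huW2 hB2)
  · rcases step1 l2 hl2 hWl2 with ⟨du2, hA2⟩ | ⟨dW2, huW2, hB2⟩
    · exact h12 (key l1 hl1 l2 hl2 hWl2 du2 hA2 dW1 huW1 hB1).symm
    · exact h12 (hB2.trans hB1.symm)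

lemma forest_bound {u : V} :
    ∀ n (F : Finset (Finset V)), F.card ≤ n → F ⊆ Lset G u → F.Nonempty →
      F.card + 1 ≤ (F.biUnion id).card := by
  intro n
  induction n with
  | zero =>
    intro F hc hF hne
    obtain ⟨l, hl⟩ := hne
    have := Finset.card_pos.2 ⟨l, hl⟩
    omega
  | succ n ih =>
    intro F hc hF hne
    obtain ⟨l, hl, x, hx, hleaf⟩ := exists_leaf HH hF hne
    by_cases hF' : (F.erase l).Nonempty
    · have hsubL : F.erase l ⊆ Lset G u := (Finset.erase_subset _ _).trans hF
      have hcard' : (F.erase l).card ≤ n := by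
        rw [Finset.card_erase_of_mem hl]; omega
      have hih := ih (F.erase l) hcard' hsubL hF'
      have hxU : x ∈ F.biUnion id := Finset.mem_biUnion.2 ⟨l, hl, hx⟩
      have hsubU : (F.erase l).biUnion id ⊆ (F.biUnion id).erase x := by
        intro y hy
        obtain ⟨l', hl', hy'⟩ := Finset.mem_biUnion.1 hy
        refine Finset.mem_erase.2 ⟨?_, Finset.mem_biUnion.2 ⟨l', Finset.mem_of_mem_erase hl', hy'⟩⟩
        intro hyx
        subst hyx
        exact (Finset.ne_of_mem_erase hl') (hleaf l' (Finset.mem_of_mem_erase hl') hy')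
      have h2 := Finset.card_le_card hsubU
      rw [Finset.card_erase_of_mem hxU] at h2
      have h3 := Finset.card_pos.2 ⟨x, hxU⟩
      have h4 := Finset.card_erase_of_mem hl
      omega
    · rw [Finset.not_nonempty_iff_eq_empty] at hF'
      have hFl : F = {l} := by
        rcases (Finset.erase_eq_empty_iff F l).1 hF' with h | h
        · exact absurd h (Finset.nonempty_iff_ne_empty.1 ⟨l, hl⟩)
        · exact h
      subst hFl
      have : ({l} : Finset (Finset V)).biUnion id = l := by simp
      rw [this, Finset.card_singleton, card_of_mem_L HH (hF hl)]

lemma biUnion_Lset (u : V) : (Lset G u).biUnion id =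
    (G.neighborFinset u).filter (fun w => ∃ t ∈ Mset G, u ∈ t ∧ w ∈ t) := by
  ext w
  simp only [Finset.mem_biUnion, Finset.mem_filter, SimpleGraph.mem_neighborFinset, id]
  constructor
  · rintro ⟨l, hl, hw⟩
    have hadj := adj_u_of_mem_L HH hl hw
    obtain ⟨v, dv, hu, rfl⟩ := mem_Lset_iff.1 hl
    exact ⟨hadj, Tvx G v, mem_Mset_iff.2 ⟨v, dv, rfl⟩, hu, Finset.mem_of_mem_erase hw⟩
  · rintro ⟨hadj, t, htM, hut, hwt⟩
    refine ⟨t.erase u, ?_, Finset.mem_erase.2 ⟨hadj.ne', hwt⟩⟩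
    exact Finset.mem_image.2 ⟨t, Finset.mem_filter.2 ⟨htM, hut⟩, rfl⟩

omit HH in
lemma cardA (u : V) : ((Mset G).filter (fun t => u ∈ t)).card = (Lset G u).card := by
  rw [Lset]
  refine (Finset.card_image_of_injOn ?_).symm
  intro t ht t' ht' h
  have hut : u ∈ t := by
    have := Finset.mem_coe.1 ht
    exact (Finset.mem_filter.1 this).2
  have hut' : u ∈ t' := by
    have := Finset.mem_coe.1 ht'
    exact (Finset.mem_filter.1 this).2
  have h' : t.erase u = t'.erase u := h
  rw [← Finset.insert_erase hut, ← Finset.insert_erase hut', h']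

lemma vertex_bound (hΔ : 1 ≤ G.maxDegree) (u : V) :
    ((Cset G).filter (fun s => u ∈ s)).card < G.maxDegree := by
  classical
  set cov := (G.neighborFinset u).filter (fun w => ∃ t ∈ Mset G, u ∈ t ∧ w ∈ t) with hcovdef
  have hcov_sub : cov ⊆ G.neighborFinset u := Finset.filter_subset _ _
  have hdeg : (G.neighborFinset u).card = G.degree u := rfl
  have hfu : (Cset G).filter (fun s => u ∈ s) =
      ((Mset G).filter (fun s => u ∈ s)) ∪ ((Eset G).filter (fun s => u ∈ s)) := by
    rw [Cset, Finset.filter_union]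
  have hEcard : ∀ s ∈ Eset G, s.card = 2 := by
    intro s hs
    obtain ⟨a, b, hadj, rfl⟩ := allPairs_shape (Finset.mem_filter.1 hs).1
    rw [Finset.card_insert_of_notMem (by simpa using hadj.ne), Finset.card_singleton]
  have hdisj : Disjoint ((Mset G).filter (fun s => u ∈ s)) ((Eset G).filter (fun s => u ∈ s)) := by
    rw [Finset.disjoint_left]
    intro s hsA hsB
    have h3 := Mset_card HH (Finset.mem_filter.1 hsA).1
    have h2 := hEcard s (Finset.mem_filter.1 hsB).1
    omega
  have hcardu : ((Cset G).filter (fun s => u ∈ s)).card =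
      ((Mset G).filter (fun s => u ∈ s)).card + ((Eset G).filter (fun s => u ∈ s)).card := by
    rw [hfu, Finset.card_union_of_disjoint hdisj]
  have hBsub : (Eset G).filter (fun s => u ∈ s) ⊆
      (G.neighborFinset u \ cov).image (fun w => insert u {w}) := by
    intro s hs
    obtain ⟨hsE, hus⟩ := Finset.mem_filter.1 hs
    obtain ⟨hsP, hnc⟩ := Finset.mem_filter.1 hsE
    obtain ⟨a, b, hadj, rfl⟩ := allPairs_shape hsP
    have hmm : ∀ w, G.Adj u w → ({a, b} : Finset V) = insert u {w} →
        ({a, b} : Finset V) ∈ (G.neighborFinset u \ cov).image (fun w => insert u {w}) := by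
      intro w hw heq
      refine Finset.mem_image.2 ⟨w, Finset.mem_sdiff.2 ⟨(SimpleGraph.mem_neighborFinset _ _ _).2 hw, ?_⟩, heq.symm⟩
      intro hwcov
      obtain ⟨-, t, htM, hut, hwt⟩ := Finset.mem_filter.1 hwcov
      refine hnc ⟨t, htM, ?_⟩
      rw [heq]
      intro x hx
      rcases Finset.mem_insert.1 hx with rfl | hx
      · exact hut
      · rw [Finset.mem_singleton.1 hx]; exact hwt
    rcases Finset.mem_insert.1 hus with h' | h'
    · exact hmm b (h' ▸ hadj) (by rw [← h'])
    · rw [Finset.mem_singleton] at h'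
      exact hmm a (h' ▸ hadj.symm) (by rw [← h', Finset.pair_comm])
  have hB : ((Eset G).filter (fun s => u ∈ s)).card ≤ G.degree u - cov.card := by
    calc ((Eset G).filter (fun s => u ∈ s)).card
        ≤ ((G.neighborFinset u \ cov).image (fun w => insert u {w})).card :=
          Finset.card_le_card hBsub
      _ ≤ (G.neighborFinset u \ cov).card := Finset.card_image_le
      _ = G.degree u - cov.card := by rw [Finset.card_sdiff_of_subset hcov_sub, hdeg]
  have hcovle : cov.card ≤ G.degree u := by rw [← hdeg]; exact Finset.card_le_card hcov_sub
  have hdegle : G.degree u ≤ G.maxDegree := G.degree_le_maxDegree u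
  have hA : ((Mset G).filter (fun t => u ∈ t)).card = (Lset G u).card := cardA u
  by_cases hLne : (Lset G u).Nonempty
  · have hfb := forest_bound HH (Lset G u).card (Lset G u) le_rfl subset_rfl hLne
    rw [biUnion_Lset HH] at hfb
    rw [← hcovdef] at hfb
    omega
  · rw [Finset.not_nonempty_iff_eq_empty] at hLne
    have hA0 : ((Mset G).filter (fun t => u ∈ t)).card = 0 := by rw [hA, hLne]; simp
    have hdu : G.degree u ≠ G.maxDegree := by
      intro du
      have : (Tvx G u).erase u ∈ Lset G u :=
        mem_Lset_iff.2 ⟨u, du, Finset.mem_insert_self _ _, rfl⟩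
      rw [hLne] at this
      exact absurd this (Finset.notMem_empty _)
    have : G.degree u < G.maxDegree := lt_of_le_of_ne hdegle hdu
    omega

lemma Cset_cover : IsCliqueCover G (Cset G) := by
  constructor
  · intro s hs
    rcases Finset.mem_union.1 hs with hs | hs
    · obtain ⟨v, dv, rfl⟩ := mem_Mset_iff.1 hs
      intro a ha b hb hab
      exact T_adj HH dv a (Finset.mem_coe.1 ha) b (Finset.mem_coe.1 hb) hab
    · obtain ⟨a, b, hadj, rfl⟩ := allPairs_shape (Finset.mem_filter.1 hs).1
      intro x hx y hy hxy
      simp only [Finset.coe_insert, Set.mem_insert_iff, Finset.coe_singleton,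
        Set.mem_singleton_iff] at hx hy
      rcases hx with rfl | rfl <;> rcases hy with rfl | rfl
      · exact absurd rfl hxy
      · exact hadj
      · exact hadj.symm
      · exact absurd rfl hxy
  · intro a b hadj
    by_cases h : ∃ t ∈ Mset G, ({a, b} : Finset V) ⊆ t
    · obtain ⟨t, htM, hsub⟩ := h
      exact ⟨t, Finset.mem_union_left _ htM,
        hsub (Finset.mem_insert_self _ _),
        hsub (Finset.mem_insert_of_mem (Finset.mem_singleton_self _))⟩
    · refine ⟨{a, b}, Finset.mem_union_right _ (Finset.mem_filter.2 ⟨mem_allPairs hadj, h⟩),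
        Finset.mem_insert_self _ _, Finset.mem_insert_of_mem (Finset.mem_singleton_self _)⟩

end withHH
end Aux

section Aux2
variable {V : Type*} [Fintype V] [DecidableEq V] [LinearOrder V]
variable (G : SimpleGraph V) [DecidableRel G.Adj]

lemma allPairs_cover : IsCliqueCover G (allPairs G) := by
  constructor
  · intro s hs
    obtain ⟨a, b, hadj, rfl⟩ := allPairs_shape hs
    intro x hx y hy hxy
    simp only [Finset.coe_insert, Set.mem_insert_iff, Finset.coe_singleton,
      Set.mem_singleton_iff] at hx hy
    rcases hx with rfl | rfl <;> rcases hy with rfl | rfl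
    · exact absurd rfl hxy
    · exact hadj
    · exact hadj.symm
    · exact absurd rfl hxy
  · intro a b hadj
    exact ⟨{a, b}, mem_allPairs hadj, Finset.mem_insert_self _ _,
      Finset.mem_insert_of_mem (Finset.mem_singleton_self _)⟩

lemma allPairs_filter (u : V) :
    (allPairs G).filter (fun s => u ∈ s) = (G.neighborFinset u).image (fun w => insert u {w}) := by
  ext s
  constructor
  · intro hs
    obtain ⟨hsP, hus⟩ := Finset.mem_filter.1 hs
    obtain ⟨a, b, hadj, rfl⟩ := allPairs_shape hsP
    rcases Finset.mem_insert.1 hus with h' | h'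
    · refine Finset.mem_image.2 ⟨b, (SimpleGraph.mem_neighborFinset _ _ _).2 (h' ▸ hadj), ?_⟩
      rw [← h']
    · rw [Finset.mem_singleton] at h'
      refine Finset.mem_image.2 ⟨a, (SimpleGraph.mem_neighborFinset _ _ _).2 (h' ▸ hadj.symm), ?_⟩
      rw [← h', Finset.pair_comm]
  · intro hs
    obtain ⟨w, hw, rfl⟩ := Finset.mem_image.1 hs
    exact Finset.mem_filter.2 ⟨mem_allPairs ((SimpleGraph.mem_neighborFinset _ _ _).1 hw),
      Finset.mem_insert_self _ _⟩

lemma allPairs_local (u : V) : ((allPairs G).filter (fun s => u ∈ s)).card = G.degree u := by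
  rw [allPairs_filter, Finset.card_image_of_injOn]
  · rfl
  · intro w hw w' hw' h
    have hwu : w ≠ u := by
      intro e
      have := (SimpleGraph.mem_neighborFinset _ _ _).1 (Finset.mem_coe.1 hw)
      rw [e] at this
      exact G.irrefl this
    have h' : (insert u ({w} : Finset V)) = insert u {w'} := h
    have hmem : w ∈ insert u ({w'} : Finset V) := by
      rw [← h']
      exact Finset.mem_insert_of_mem (Finset.mem_singleton_self w)
    rcases Finset.mem_insert.1 hmem with h1 | h1
    · exact absurd h1 hwu
    · exact Finset.mem_singleton.1 h1

end Aux2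

section Key
variable {V : Type*} [Fintype V] [DecidableEq V] [LinearOrder V]
variable (G : SimpleGraph V) [DecidableRel G.Adj]

lemma key_lemma (hΔ : 1 ≤ G.maxDegree)
    (H : ∀ v : V, G.degree v = G.maxDegree → (cand1 G v).Nonempty) :
    ∃ C : Finset (Finset V), IsCliqueCover G C ∧
      ∀ x : V, (C.filter (fun s => x ∈ s)).card ≤ G.maxDegree - 1 :=
  ⟨Cset G, Cset_cover H, fun x => Nat.le_pred_of_lt (vertex_bound H hΔ x)⟩

end Key

theorem stmt2 {V : Type*} [Fintype V] [DecidableEq V] [Nonempty V] (G : SimpleGraph V)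
    [DecidableRel G.Adj] :
    lcc G = G.maxDegree ↔
      ∃ x : V, G.degree x = G.maxDegree ∧
        ∀ y ∈ G.neighborSet x, ∀ z ∈ G.neighborSet x, y ≠ z → ¬G.Adj y z := by
  letI : LinearOrder V := LinearOrder.lift' (Fintype.equivFin V) (Fintype.equivFin V).injective
  have hub : lcc G ≤ G.maxDegree :=
    Nat.sInf_le ⟨allPairs G, allPairs_cover G, fun u => by
      rw [allPairs_local]; exact G.degree_le_maxDegree u⟩
  constructor
  · intro hl
    by_cases hΔ : G.maxDegree = 0
    · refine ⟨Classical.arbitrary V, ?_, ?_⟩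
      · have := G.degree_le_maxDegree (Classical.arbitrary V); omega
      · intro y hy z hz hyz hadj
        rw [SimpleGraph.mem_neighborSet] at hy
        have h1 : G.degree (Classical.arbitrary V) = 0 := by
          have := G.degree_le_maxDegree (Classical.arbitrary V); omega
        have h2 : y ∈ G.neighborFinset (Classical.arbitrary V) :=
          (SimpleGraph.mem_neighborFinset _ _ _).2 hy
        have h3 : (G.neighborFinset (Classical.arbitrary V)).card = 0 := h1
        rw [Finset.card_eq_zero] at h3
        rw [h3] at h2
        exact absurd h2 (Finset.notMem_empty _)
    · by_contra hR
      push_neg at hR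
      have H : ∀ v, G.degree v = G.maxDegree → (cand1 G v).Nonempty := by
        intro v dv
        obtain ⟨y, hy, z, hz, hyz, hadj⟩ := hR v dv
        rw [SimpleGraph.mem_neighborSet] at hy hz
        rcases lt_or_gt_of_ne hyz with h | h
        · exact ⟨y, Finset.mem_filter.2 ⟨(SimpleGraph.mem_neighborFinset _ _ _).2 hy,
            z, (SimpleGraph.mem_neighborFinset _ _ _).2 hz, h, hadj⟩⟩
        · exact ⟨z, Finset.mem_filter.2 ⟨(SimpleGraph.mem_neighborFinset _ _ _).2 hz,
            y, (SimpleGraph.mem_neighborFinset _ _ _).2 hy, h, hadj.symm⟩⟩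
      obtain ⟨C, hC, hCb⟩ := key_lemma G (by omega) H
      have : lcc G ≤ G.maxDegree - 1 := Nat.sInf_le ⟨C, hC, hCb⟩
      omega
  · rintro ⟨x, dx, hind⟩
    refine le_antisymm hub ?_
    refine le_csInf ⟨G.maxDegree, allPairs G, allPairs_cover G, fun u => by
      rw [allPairs_local]; exact G.degree_le_maxDegree u⟩ ?_
    rintro k ⟨C, ⟨hcl, hcov⟩, hloc⟩
    classical
    set f : V → Finset V := fun y => if h : G.Adj x y then (hcov x y h).choose else ∅ with hf
    have hfspec : ∀ y, G.Adj x y → f y ∈ C ∧ x ∈ f y ∧ y ∈ f y := by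
      intro y h
      rw [hf]
      simp only [dif_pos h]
      obtain ⟨hm, hx, hy⟩ := (hcov x y h).choose_spec
      exact ⟨hm, hx, hy⟩
    have hmaps : ∀ y ∈ G.neighborFinset x, f y ∈ C.filter (fun s => x ∈ s) := by
      intro y hy
      have h := (SimpleGraph.mem_neighborFinset _ _ _).1 hy
      exact Finset.mem_filter.2 ⟨(hfspec y h).1, (hfspec y h).2.1⟩
    have hinj : Set.InjOn f (G.neighborFinset x) := by
      intro y hy y' hy' heq
      have hady := (SimpleGraph.mem_neighborFinset _ _ _).1 (Finset.mem_coe.1 hy)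
      have hady' := (SimpleGraph.mem_neighborFinset _ _ _).1 (Finset.mem_coe.1 hy')
      by_contra hne
      have h1 := hfspec y hady
      have h2 := hfspec y' hady'
      have hclique := hcl (f y) h1.1
      have hadj : G.Adj y y' := hclique (Finset.mem_coe.2 h1.2.2)
        (Finset.mem_coe.2 (heq ▸ h2.2.2)) hne
      exact hind y hady y' hady' hne hadj
    have hcard := Finset.card_le_card_of_injOn f hmaps hinj
    calc G.maxDegree = G.degree x := dx.symm
      _ = (G.neighborFinset x).card := rfl
      _ ≤ (C.filter (fun s => x ∈ s)).card := hcard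
      _ ≤ k := hloc x
end

section
/- There exists a constant c₁ > 0 such that for every sufficiently large n there exists a cobipartite graph G on n vertices (the disjoint union of two cliques of size n/2 plus some edges between them) with lcc(G) > c₁·n/log n. -/
/-!
A graph with `lcc G ≤ t` is determined by giving each vertex `t` slots holding the names of the
cliques through it (or nothing). Discarding the empty clique, a cover has at most `n * t`
cliques, so at most `(n t + 1) ^ (t n)` graphs on `n` vertices have `lcc ≤ t`. For
`t ≈ n / (25 log n)` this is less than `2 ^ (⌊n/2⌋ ⌈n/2⌉)`, the number of cobipartite graphs
with two fixed cliques of sizes `⌊n/2⌋` and `⌈n/2⌉`.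
-/

open SimpleGraph Finset

section LocalCliqueCover

variable {V : Type*} [DecidableEq V] [Fintype V] {G : SimpleGraph V} {t : ℕ}

lemma exists_isCliqueCover_of_lcc_le (h : lcc G ≤ t) :
    ∃ C : Finset (Finset V), IsCliqueCover G C ∧ ∀ x, #{s ∈ C | x ∈ s} ≤ t := by
  classical
  have hne : {k | ∃ C : Finset (Finset V), IsCliqueCover G C ∧
      ∀ x, #{s ∈ C | x ∈ s} ≤ k}.Nonempty := by
    refine ⟨_, ({s | G.IsClique (s : Set V)} : Finset (Finset V)),
      ⟨fun s hs => (mem_filter.1 hs).2, fun u v huv => ?_⟩, fun _ => card_filter_le _ _⟩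
    exact ⟨{u, v}, mem_filter.2 ⟨mem_univ _, by simpa using isClique_pair.2 fun _ => huv⟩,
      by simp, by simp⟩
  obtain ⟨C, hC, hloc⟩ := Nat.sInf_mem hne
  exact ⟨C, hC, fun x => (hloc x).trans h⟩

lemma exists_isCliqueCover_card_le (h : lcc G ≤ t) :
    ∃ C : Finset (Finset V), IsCliqueCover G C ∧ (∀ x, #{s ∈ C | x ∈ s} ≤ t) ∧
      #C ≤ Fintype.card V * t := by
  obtain ⟨C, ⟨hclique, hcover⟩, hloc⟩ := exists_isCliqueCover_of_lcc_le h
  refine ⟨{s ∈ C | s.Nonempty}, ⟨fun s hs => hclique s (mem_filter.1 hs).1, fun u v huv => ?_⟩,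
    fun x => ?_, ?_⟩
  · obtain ⟨s, hs, hu, hv⟩ := hcover u v huv
    exact ⟨s, mem_filter.2 ⟨hs, u, hu⟩, hu, hv⟩
  · exact (card_le_card (filter_subset_filter _ (filter_subset _ _))).trans (hloc x)
  · calc #{s ∈ C | s.Nonempty}
        ≤ #(univ.biUnion fun x => {s ∈ C | x ∈ s}) := by
          refine card_le_card fun s hs => ?_
          obtain ⟨hsC, x, hx⟩ := mem_filter.1 hs
          exact mem_biUnion.2 ⟨x, mem_univ x, mem_filter.2 ⟨hsC, hx⟩⟩
      _ ≤ ∑ x, #{s ∈ C | x ∈ s} := card_biUnion_le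
      _ ≤ Fintype.card V * t := by
          simpa using sum_le_card_nsmul univ _ t fun x _ => hloc x

end LocalCliqueCover

section IntersectionRep

variable {V L L' : Type*} {t : ℕ}

/-- A `t`-representation of `G` with labels in `L`; `none` marks an empty slot. -/
def IsIntersectionRep (G : SimpleGraph V) (e : V → Fin t → Option L) : Prop :=
  ∀ u v, G.Adj u v ↔ u ≠ v ∧ ∃ i j, ∃ l, e u i = some l ∧ e v j = some l

lemma IsIntersectionRep.eq {G H : SimpleGraph V} {e : V → Fin t → Option L}
    (hG : IsIntersectionRep G e) (hH : IsIntersectionRep H e) : G = H := by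
  ext u v
  rw [hG, hH]

lemma IsIntersectionRep.map {G : SimpleGraph V} {e : V → Fin t → Option L} {κ : L → L'}
    (he : IsIntersectionRep G e) (hκ : Function.Injective κ) :
    IsIntersectionRep G fun v i => (e v i).map κ := by
  intro u v
  rw [he]
  simp only [Option.map_eq_some_iff]
  constructor
  · rintro ⟨huv, i, j, l, hu, hv⟩
    exact ⟨huv, i, j, κ l, ⟨l, hu, rfl⟩, ⟨l, hv, rfl⟩⟩
  · rintro ⟨huv, i, j, -, ⟨l, hu, rfl⟩, ⟨l', hv, hl⟩⟩
    exact ⟨huv, i, j, l, hu, hκ hl ▸ hv⟩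

variable [DecidableEq V] {G : SimpleGraph V} {C : Finset (Finset V)}

lemma IsCliqueCover.exists_isIntersectionRep (hC : IsCliqueCover G C)
    (hloc : ∀ x, #{s ∈ C | x ∈ s} ≤ t) : ∃ e : V → Fin t → Option C, IsIntersectionRep G e := by
  classical
  let ι x : {s // s ∈ C.filter (x ∈ ·)} ↪ Fin t :=
    (C.filter (x ∈ ·)).equivFin.toEmbedding.trans (Fin.castLEEmb (hloc x))
  let e x i : Option C :=
    (Function.partialInv (ι x) i).map fun s => ⟨s.1, (mem_filter.1 s.2).1⟩
  have slot : ∀ x s (hs : s ∈ C), x ∈ s → ∃ i, e x i = some ⟨s, hs⟩ := fun x s hs hx =>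
    ⟨ι x ⟨s, mem_filter.2 ⟨hs, hx⟩⟩, by simp [e, Function.partialInv_left (ι x).injective]⟩
  have mem : ∀ x i (l : C), e x i = some l → x ∈ (l : Finset V) := by
    rintro x i l hl
    obtain ⟨s, -, rfl⟩ := Option.map_eq_some_iff.1 hl
    exact (mem_filter.1 s.property).2
  refine ⟨e, fun u v => ⟨fun huv => ?_, ?_⟩⟩
  · obtain ⟨s, hs, hu, hv⟩ := hC.2 u v huv
    obtain ⟨i, hi⟩ := slot u s hs hu
    obtain ⟨j, hj⟩ := slot v s hs hv
    exact ⟨huv.ne, i, j, _, hi, hj⟩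
  · rintro ⟨huv, i, j, l, hu, hv⟩
    exact hC.1 l l.2 (mem u i l hu) (mem v j l hv) huv

end IntersectionRep

section Counting

variable {V : Type*} [DecidableEq V] [Fintype V]

lemma exists_isIntersectionRep_of_lcc_le {G : SimpleGraph V} {t : ℕ} (h : lcc G ≤ t) :
    ∃ e : V → Fin t → Option (Fin (Fintype.card V * t)), IsIntersectionRep G e := by
  obtain ⟨C, hC, hloc, hcard⟩ := exists_isCliqueCover_card_le h
  obtain ⟨e, he⟩ := hC.exists_isIntersectionRep hloc
  exact ⟨_, he.map (C.equivFin.toEmbedding.trans (Fin.castLEEmb hcard)).injective⟩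

theorem ncard_setOf_lcc_le_le (t : ℕ) :
    {G : SimpleGraph V | lcc G ≤ t}.ncard ≤ (Fintype.card V * t + 1) ^ (t * Fintype.card V) := by
  choose! e he using fun (G : SimpleGraph V) (hG : lcc G ≤ t) =>
    exists_isIntersectionRep_of_lcc_le hG
  calc {G : SimpleGraph V | lcc G ≤ t}.ncard
      ≤ (Set.univ : Set (V → Fin t → Option (Fin (Fintype.card V * t)))).ncard :=
        Set.ncard_le_ncard_of_injOn e (fun _ _ => trivial)
          fun G hG H hH hGH => (he G hG).eq (hGH ▸ he H hH)
    _ = (Fintype.card V * t + 1) ^ (t * Fintype.card V) := by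
        simp [Set.ncard_univ, Fintype.card_option, ← pow_mul, mul_comm]

end Counting

section Cobipartite

variable {V : Type*}

def cobipartiteGraph (A : Finset V) (S : Finset (V × V)) : SimpleGraph V :=
  SimpleGraph.fromRel fun u v => (u ∈ A ↔ v ∈ A) ∨ (u, v) ∈ S

lemma isClique_cobipartiteGraph_left (A : Finset V) (S : Finset (V × V)) :
    (cobipartiteGraph A S).IsClique (A : Set V) := fun _ hu _ hv huv =>
  ⟨huv, Or.inl (Or.inl (iff_of_true hu hv))⟩

variable [DecidableEq V] [Fintype V] {A : Finset V}

lemma isClique_cobipartiteGraph_right (S : Finset (V × V)) :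
    (cobipartiteGraph A S).IsClique (Aᶜ : Finset V) := fun _ hu _ hv huv =>
  ⟨huv, Or.inl (Or.inl (iff_of_false (mem_compl.1 hu) (mem_compl.1 hv)))⟩

lemma subset_of_cobipartiteGraph_le {S T : Finset (V × V)} (hS : S ⊆ A ×ˢ Aᶜ)
    (hT : T ⊆ A ×ˢ Aᶜ) (h : cobipartiteGraph A S ≤ cobipartiteGraph A T) : S ⊆ T := by
  rintro ⟨u, v⟩ huv
  obtain ⟨hu, hv⟩ := mem_product.1 (hS huv)
  rw [mem_compl] at hv
  obtain ⟨-, (hside | huvT) | (hside | hvuT)⟩ :=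
    h (⟨fun h => hv (h ▸ hu), Or.inl (Or.inr huv)⟩ : (cobipartiteGraph A S).Adj u v)
  · exact absurd (hside.1 hu) hv
  · exact huvT
  · exact absurd (hside.2 hu) hv
  · exact absurd (mem_product.1 (hT hvuT)).1 hv

lemma injOn_cobipartiteGraph :
    Set.InjOn (cobipartiteGraph A) ((A ×ˢ Aᶜ).powerset : Set (Finset (V × V))) :=
  fun S hS T hT h => by
    rw [mem_coe, mem_powerset] at hS hT
    exact (subset_of_cobipartiteGraph_le hS hT h.le).antisymm
      (subset_of_cobipartiteGraph_le hT hS h.ge)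

theorem exists_lt_lcc_cobipartiteGraph (A : Finset V) {t : ℕ}
    (h : (Fintype.card V * t + 1) ^ (t * Fintype.card V) < 2 ^ (#A * #Aᶜ)) :
    ∃ S, t < lcc (cobipartiteGraph A S) := by
  by_contra! hle
  have hcount : 2 ^ (#A * #Aᶜ) ≤ {G : SimpleGraph V | lcc G ≤ t}.ncard := by
    calc 2 ^ (#A * #Aᶜ) = ((A ×ˢ Aᶜ).powerset : Set (Finset (V × V))).ncard := by
          rw [Set.ncard_coe_finset, card_powerset, card_product]
      _ ≤ _ := Set.ncard_le_ncard_of_injOn _ (fun S _ => hle S) injOn_cobipartiteGraph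
  exact (h.trans_le hcount).not_ge (ncard_setOf_lcc_le_le t)

end Cobipartite

lemma natLog_add_one_le_two_mul_logb {n : ℕ} (hn : 2 ≤ n) :
    (Nat.log 2 n + 1 : ℝ) ≤ 2 * Real.logb 2 n := by
  have hk : (Nat.log 2 n : ℝ) ≤ Real.logb 2 n := mod_cast Real.natLog_le_logb n 2
  have h1 : (1 : ℝ) ≤ Real.logb 2 n := by
    rw [Real.le_logb_iff_rpow_le one_lt_two (by positivity)]
    exact_mod_cast (by simpa using hn)
  linarith

/-- Each of the `t * n` slots costs at most `2 * (k + 1)` bits, in total at most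
`2 n² / 25 < ⌊n/2⌋ ⌈n/2⌉`. -/
lemma mul_add_one_pow_lt_two_pow {n k t : ℕ} (hn : 2 ≤ n) (hk : n < 2 ^ (k + 1))
    (ht : 25 * (k + 1) * t ≤ n) : (n * t + 1) ^ (t * n) < 2 ^ (n / 2 * (n - n / 2)) := by
  have htn : t ≤ n := le_trans (Nat.le_mul_of_pos_left t (by positivity)) ht
  have hbase : n * t + 1 ≤ 2 ^ (2 * (k + 1)) := by
    rw [mul_comm, pow_mul']
    nlinarith
  have hexp : 2 * (k + 1) * (t * n) < n / 2 * (n - n / 2) := by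
    have h1 : 25 * (2 * (k + 1) * (t * n)) ≤ 2 * n * n := by
      nlinarith [Nat.mul_le_mul_right (2 * n) ht]
    have h2 : 2 * n * n < 25 * (n / 2 * (n - n / 2)) := by
      obtain ⟨a, b, rfl, hab, hba, ha⟩ : ∃ a b, n = a + b ∧ a ≤ b ∧ b ≤ a + 1 ∧ 1 ≤ a :=
        ⟨n / 2, n - n / 2, by omega, by omega, by omega, by omega⟩
      rw [show (a + b) / 2 = a by omega, Nat.add_sub_cancel_left]
      nlinarith
    linarith
  calc (n * t + 1) ^ (t * n) ≤ (2 ^ (2 * (k + 1))) ^ (t * n) := Nat.pow_le_pow_left hbase _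
    _ = 2 ^ (2 * (k + 1) * (t * n)) := (pow_mul _ _ _).symm
    _ < 2 ^ (n / 2 * (n - n / 2)) := Nat.pow_lt_pow_right one_lt_two hexp

theorem stmt10 : ∃ c₁ : ℝ, 0 < c₁ ∧ ∃ N : ℕ, ∀ n : ℕ, N ≤ n →
    ∃ G : SimpleGraph (Fin n),
      (∃ A B : Finset (Fin n), A ∪ B = Finset.univ ∧ Disjoint A B ∧
        A.card = n / 2 ∧ G.IsClique (A : Set (Fin n)) ∧ G.IsClique (B : Set (Fin n))) ∧
      c₁ * (n : ℝ) / Real.logb 2 (n : ℝ) < (lcc G : ℝ) := by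
  refine ⟨1 / 50, by norm_num, 2, fun n hn => ?_⟩
  set k := Nat.log 2 n
  set t := n / (25 * (k + 1))
  set A : Finset (Fin n) := Iio ⟨n / 2, by omega⟩
  have hA : #A = n / 2 := Fin.card_Iio _
  have hAc : #Aᶜ = n - n / 2 := by rw [card_compl, Fintype.card_fin, hA]
  obtain ⟨S, hS⟩ := exists_lt_lcc_cobipartiteGraph A (t := t) <| by
    rw [Fintype.card_fin, hA, hAc]
    exact mul_add_one_pow_lt_two_pow hn (Nat.lt_pow_succ_log_self one_lt_two n)
      (Nat.mul_div_le n _)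
  refine ⟨cobipartiteGraph A S, ⟨A, Aᶜ, union_compl A, disjoint_compl_right, hA,
    isClique_cobipartiteGraph_left A S, isClique_cobipartiteGraph_right S⟩, ?_⟩
  have hlog := natLog_add_one_le_two_mul_logb hn
  calc 1 / 50 * (n : ℝ) / Real.logb 2 n ≤ n / (25 * (k + 1)) := by
        rw [div_le_div_iff₀ (by linarith) (by positivity)]
        nlinarith [(Nat.cast_nonneg n : (0 : ℝ) ≤ n)]
    _ < t + 1 := by
        have h := Nat.lt_floor_add_one ((n : ℝ) / ↑(25 * (k + 1)))
        rw [Nat.floor_div_eq_div] at h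
        exact_mod_cast h
    _ ≤ lcc (cobipartiteGraph A S) := mod_cast hS
end

section
/- If G_t denotes the complete t-partite graph K_{2,2,…,2} with all parts of size 2, then lcc(G_t) > (1/2)·log₂ t − 1. -/
/-!
Take a clique cover in which every vertex lies in at most `k` cliques, and let `S p`, `T p` be
the sets of cliques through the two vertices of part `p`. No clique contains both vertices of a
part, and the edge `(p, 0) (q, 1)` lies in some clique, so `S p ∩ T p = ∅` while
`S p ∩ T q ≠ ∅` for `p ≠ q`. Colour the cliques at random: the events "`false` on `S p` and
`true` on `T p`" are then pairwise disjoint and each has probability at least `4⁻ᵏ`, so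
`t ≤ 4 ^ k` (a weak form of Bollobás' set-pair inequality), i.e. `lcc ≥ (log₂ t) / 2`.
-/

open SimpleGraph Finset

/-- The complete `t`-partite graph `K_{2,2,…,2}` with all parts of size 2:
vertices are pairs `(p, i)` with `p` the part; adjacency iff different parts. -/
def cocktailGraph (t : ℕ) : SimpleGraph (Fin t × Fin 2) where
  Adj u v := u.1 ≠ v.1
  symm := ⟨fun _ _ h => h.symm⟩
  loopless := ⟨fun _ h => h rfl⟩

section SetPairs

variable {α : Type*} [Fintype α] [DecidableEq α]

def colouringsSeparating (A B : Finset α) : Finset (α → Bool) :=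
  Fintype.piFinset fun x => if x ∈ A then {false} else if x ∈ B then {true} else univ

lemma card_colouringsSeparating_mul {A B : Finset α} (hAB : Disjoint A B) :
    #(colouringsSeparating A B) * 2 ^ (#A + #B) = 2 ^ Fintype.card α := by
  have hfactor : ∀ x, #(if x ∈ A then {false} else if x ∈ B then {true} else univ) =
      if x ∈ A ∪ B then 1 else 2 := by
    intro x
    by_cases hA : x ∈ A <;> by_cases hB : x ∈ B <;> simp [hA, hB]
  have hfixed : 2 ^ (#A + #B) = ∏ x, if x ∈ A ∪ B then 2 else 1 := by
    rw [prod_ite_mem, univ_inter, prod_const, card_union_of_disjoint hAB]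
  rw [colouringsSeparating, Fintype.card_piFinset, hfixed, ← prod_mul_distrib, ← card_univ,
    ← prod_const]
  refine prod_congr rfl fun x _ => ?_
  rw [hfactor]
  split_ifs <;> rfl

lemma colouringsSeparating_disjoint {A B A' B' : Finset α} (hA'B' : Disjoint A' B')
    (h : (A ∩ B').Nonempty) :
    Disjoint (colouringsSeparating A B) (colouringsSeparating A' B') := by
  obtain ⟨x, hx⟩ := h
  rw [mem_inter] at hx
  refine disjoint_left.mpr fun f hf hf' => ?_
  have hfalse := Fintype.mem_piFinset.mp hf x
  have htrue := Fintype.mem_piFinset.mp hf' x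
  simp_all [disjoint_right.mp hA'B' hx.2]

theorem card_le_two_pow_of_crossIntersecting {ι : Type*} [Fintype ι] (m : ℕ)
    (S T : ι → Finset α) (hST : ∀ p, Disjoint (S p) (T p))
    (hcross : ∀ p q, p ≠ q → (S p ∩ T q).Nonempty) (hm : ∀ p, #(S p) + #(T p) ≤ m) :
    Fintype.card ι ≤ 2 ^ m := by
  set F := fun p => colouringsSeparating (S p) (T p)
  have hsum : ∑ p, #(F p) ≤ 2 ^ Fintype.card α := by
    rw [← card_biUnion fun p _ q _ hpq => colouringsSeparating_disjoint (hST q) (hcross p q hpq)]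
    simpa using card_le_univ (univ.biUnion F)
  refine Nat.le_of_mul_le_mul_right ?_ (Nat.two_pow_pos (Fintype.card α))
  calc Fintype.card ι * 2 ^ Fintype.card α
      = ∑ p, #(F p) * 2 ^ (#(S p) + #(T p)) := by
        simp only [F, card_colouringsSeparating_mul (hST _), sum_const, card_univ, smul_eq_mul]
    _ ≤ ∑ p, #(F p) * 2 ^ m := by
        gcongr with p
        · norm_num
        · exact hm p
    _ ≤ 2 ^ Fintype.card α * 2 ^ m := by rw [← sum_mul]; gcongr
    _ = 2 ^ m * 2 ^ Fintype.card α := mul_comm _ _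

end SetPairs

lemma exists_isCliqueCover_card_filter_le_lcc {V : Type*} [Fintype V] [DecidableEq V]
    (G : SimpleGraph V) :
    ∃ C : Finset (Finset V), IsCliqueCover G C ∧ ∀ x, #(C.filter (x ∈ ·)) ≤ lcc G := by
  classical
  refine Nat.sInf_mem (s := {k | ∃ C : Finset (Finset V), IsCliqueCover G C ∧
    ∀ x, #(C.filter (x ∈ ·)) ≤ k}) ?_
  refine ⟨_, univ.filter (fun s => G.IsClique (s : Set V)), ⟨?_, ?_⟩,
    fun x => card_filter_le _ _⟩
  · intro s hs
    exact (mem_filter.mp hs).2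
  · intro u v huv
    refine ⟨{u, v}, ?_, by simp, by simp⟩
    simpa [mem_filter] using isClique_pair.mpr fun _ => huv

lemma card_le_four_pow_of_isCliqueCover_cocktailGraph {t k : ℕ}
    {C : Finset (Finset (Fin t × Fin 2))} (hC : IsCliqueCover (cocktailGraph t) C)
    (hk : ∀ x, #(C.filter (x ∈ ·)) ≤ k) : t ≤ 4 ^ k := by
  have hcard := card_le_two_pow_of_crossIntersecting (2 * k)
    (fun p => C.filter ((p, 0) ∈ ·)) (fun p => C.filter ((p, 1) ∈ ·))
    (fun p => disjoint_filter.mpr fun s hs h0 h1 =>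
      hC.1 s hs h0 h1 (by simp) rfl)
    (fun p q hpq => by
      obtain ⟨s, hs, h0, h1⟩ := hC.2 (p, 0) (q, 1) hpq
      exact ⟨s, mem_inter.mpr ⟨mem_filter.mpr ⟨hs, h0⟩, mem_filter.mpr ⟨hs, h1⟩⟩⟩)
    (fun p => by have := hk (p, 0); have := hk (p, 1); omega)
  simpa [pow_mul] using hcard

theorem stmt12 (t : ℕ) (ht : 1 ≤ t) :
    (1 / 2 : ℝ) * Real.logb 2 (t : ℝ) - 1 < (lcc (cocktailGraph t) : ℝ) := by
  obtain ⟨C, hC, hk⟩ := exists_isCliqueCover_card_filter_le_lcc (cocktailGraph t)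
  have hpow : (t : ℝ) ≤ 2 ^ ((2 * lcc (cocktailGraph t) : ℕ) : ℝ) := by
    rw [Real.rpow_natCast, pow_mul]
    exact_mod_cast card_le_four_pow_of_isCliqueCover_cocktailGraph hC hk
  have hlog := (Real.logb_le_iff_le_rpow (by norm_num) (by exact_mod_cast ht)).mpr hpow
  push_cast at hlog
  linarith
end

section
/- The maximum size of a family {(A_i,B_i) : 1 ≤ i ≤ k} of pairs of finite sets with |A_i| ≤ r, |B_i| ≤ s and A_i ∩ B_j ≠ ∅ iff i ≥ j, equals the maximum n such that the 1-entries of the n×n lower-triangular all-ones matrix T_n can be covered by all-ones submatrices with each row meeting at most r and each column at most s of them. -/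
open Finset

/-- A rectangle covering of the lower-triangular all-ones `n × n` matrix `T_n`:
a family of rectangles (pairs of a row set and a column set) which are all-ones
(every row index is ≥ every column index) and cover every entry `(i,j)` with `i ≥ j`. -/
def TriCover (n : ℕ) (F : Finset (Finset (Fin n) × Finset (Fin n))) : Prop :=
  (∀ p ∈ F, ∀ i ∈ p.1, ∀ j ∈ p.2, (j : ℕ) ≤ (i : ℕ)) ∧
  ∀ i j : Fin n, (j : ℕ) ≤ (i : ℕ) → ∃ p ∈ F, i ∈ p.1 ∧ j ∈ p.2

/-- The number of rectangles of `F` meeting row `i`. -/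
def rowVal {n : ℕ} (F : Finset (Finset (Fin n) × Finset (Fin n))) (i : Fin n) : ℕ :=
  (F.filter (fun p => i ∈ p.1)).card

/-- The number of rectangles of `F` meeting column `j`. -/
def colVal {n : ℕ} (F : Finset (Finset (Fin n) × Finset (Fin n))) (j : Fin n) : ℕ :=
  (F.filter (fun p => j ∈ p.2)).card

/-- `trif r s` is the maximum `n` such that `T_n` admits a rectangle covering with
row valency at most `r` and column valency at most `s`. -/
noncomputable def trif (r s : ℕ) : ℕ :=
  sSup {n | ∃ F : Finset (Finset (Fin n) × Finset (Fin n)), TriCover n F ∧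
    (∀ i : Fin n, rowVal F i ≤ r) ∧ ∀ j : Fin n, colVal F j ≤ s}

theorem stmt16 (r s : ℕ) (hr : 1 ≤ r) (hs : 1 ≤ s) :
    sSup {k | ∃ A B : Fin k → Finset ℕ,
      (∀ i, (A i).card ≤ r) ∧ (∀ i, (B i).card ≤ s) ∧
      ∀ i j : Fin k, (A i ∩ B j).Nonempty ↔ j ≤ i} = trif r s := by
  unfold trif
  congr 1
  ext n
  simp only [Set.mem_setOf_eq]
  constructor
  · rintro ⟨A, B, hA, hB, hAB⟩
    classical
    set f : ℕ → Finset (Fin n) × Finset (Fin n) :=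
      fun x => (Finset.univ.filter (fun i => x ∈ A i),
                Finset.univ.filter (fun j => x ∈ B j)) with hf
    set X : Finset ℕ := Finset.univ.biUnion A with hX
    refine ⟨X.image f, ⟨?_, ?_⟩, ?_, ?_⟩
    · rintro p hp i hi j hj
      obtain ⟨x, hx, rfl⟩ := Finset.mem_image.mp hp
      simp only [hf, Finset.mem_filter, Finset.mem_univ, true_and] at hi hj
      have : (A i ∩ B j).Nonempty := ⟨x, Finset.mem_inter.mpr ⟨hi, hj⟩⟩
      exact Fin.le_def.mp ((hAB i j).mp this)
    · intro i j hij
      obtain ⟨x, hx⟩ := (hAB i j).mpr (Fin.le_def.mpr hij)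
      rw [Finset.mem_inter] at hx
      refine ⟨f x, Finset.mem_image_of_mem f ?_, ?_, ?_⟩
      · exact Finset.mem_biUnion.mpr ⟨i, Finset.mem_univ i, hx.1⟩
      · simp [hf, hx.1]
      · simp [hf, hx.2]
    · intro i
      have hsub : (X.image f).filter (fun p => i ∈ p.1) ⊆ (A i).image f := by
        intro p hp
        rw [Finset.mem_filter, Finset.mem_image] at hp
        obtain ⟨⟨x, hx, rfl⟩, hi⟩ := hp
        simp only [hf, Finset.mem_filter, Finset.mem_univ, true_and] at hi
        exact Finset.mem_image_of_mem f hi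
      calc rowVal (X.image f) i ≤ ((A i).image f).card := Finset.card_le_card hsub
        _ ≤ (A i).card := Finset.card_image_le
        _ ≤ r := hA i
    · intro j
      have hsub : (X.image f).filter (fun p => j ∈ p.2) ⊆ (B j).image f := by
        intro p hp
        rw [Finset.mem_filter, Finset.mem_image] at hp
        obtain ⟨⟨x, hx, rfl⟩, hj⟩ := hp
        simp only [hf, Finset.mem_filter, Finset.mem_univ, true_and] at hj
        exact Finset.mem_image_of_mem f hj
      calc colVal (X.image f) j ≤ ((B j).image f).card := Finset.card_le_card hsub
        _ ≤ (B j).card := Finset.card_image_le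
        _ ≤ s := hB j
  · rintro ⟨F, ⟨hones, hcov⟩, hrow, hcol⟩
    classical
    set e : Finset (Fin n) × Finset (Fin n) → ℕ := Encodable.encode with he
    refine ⟨fun i => (F.filter (fun p => i ∈ p.1)).image e,
            fun j => (F.filter (fun p => j ∈ p.2)).image e, ?_, ?_, ?_⟩
    · intro i; exact Finset.card_image_le.trans (hrow i)
    · intro j; exact Finset.card_image_le.trans (hcol j)
    · intro i j
      constructor
      · rintro ⟨x, hx⟩
        rw [Finset.mem_inter, Finset.mem_image, Finset.mem_image] at hx
        obtain ⟨⟨p, hp, hpe⟩, q, hq, hqe⟩ := hx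
        rw [Finset.mem_filter] at hp hq
        have hpq : p = q := Encodable.encode_injective (hpe.trans hqe.symm)
        subst hpq
        exact Fin.le_def.mpr (hones p hp.1 i hp.2 j hq.2)
      · intro h
        obtain ⟨p, hpF, hi, hj⟩ := hcov i j (Fin.le_def.mp h)
        exact ⟨e p, Finset.mem_inter.mpr
          ⟨Finset.mem_image_of_mem e (Finset.mem_filter.mpr ⟨hpF, hi⟩),
           Finset.mem_image_of_mem e (Finset.mem_filter.mpr ⟨hpF, hj⟩)⟩⟩
end

section
/- The local boolean rank of the n×n lower-triangular all-ones matrix T_n satisfies lr_B(T_n) = (1/2)·log₂ n + (1/4)·log₂ log₂ n + O(1); in particular there exist constants c₁, c₂ with (1/2)log₂ n + (1/4)log₂ log₂ n − c₁ ≤ lr_B(T_n) ≤ (1/2)log₂ n + (1/4)log₂ log₂ n + c₂ for all n ≥ 2. -/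
/-!
Lower bound: if `T_{n+1}` is covered with row valency `r` and column valency `s`, the sets
`A_i` of rectangles meeting column `i + 1` and `B_i` of rectangles meeting row `i` (`i < n`)
satisfy `A_i ∩ B_i = ∅` and `A_j ∩ B_i ≠ ∅` for `j < i`, so the skew Bollobás theorem gives
`n ≤ C(r + s, r)`. It is proved by Lovász's polynomial method: for `P_i = ∏_{z ∈ B_i} (X - z)`
the matrix `(∏_{w ∈ A_j} P_i(w))_{i,j}` is triangular with nonzero diagonal, and it factors
through the `C(a + b, a)`-dimensional space of symmetric polynomials in `a` variables of
degree `≤ b` in each variable.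

Upper bound: covers of `T_p` and `T_q` placed on the diagonal blocks of `T_{p+1+q}`, together
with the rectangle `[p, p + q] × [0, p]`, cover `T_{p+1+q}`; by Pascal's rule this covers `T_n`
with valencies `(r, s)` whenever `n < C(r + s, r)`.

With `r = s = k` the threshold is `C(2k, k) ≍ 4^k / √k`, which gives
`lr_B(T_n) = ½ log₂ n + ¼ log₂ log₂ n + O(1)`.
-/

open Finset

/-- The local boolean rank of `T_n`: the least `k` such that `T_n` admits a rectangle
covering in which every row and every column meets at most `k` rectangles. -/
noncomputable def lrB (n : ℕ) : ℕ :=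
  sInf {k | ∃ F : Finset (Finset (Fin n) × Finset (Fin n)), TriCover n F ∧
    (∀ i : Fin n, rowVal F i ≤ k) ∧ ∀ j : Fin n, colVal F j ≤ k}

open Polynomial

theorem Matrix.card_le_card_of_isUpperTriangular_mul {R m ι : Type*} [Field R] [Fintype m]
    [LinearOrder m] [Fintype ι] (U : Matrix m ι R) (V : Matrix ι m R)
    (hUV : (U * V).IsUpperTriangular) (hdiag : ∀ i, (U * V) i i ≠ 0) :
    Fintype.card m ≤ Fintype.card ι :=
  calc Fintype.card m = (1 : Matrix m m R).rank := Matrix.rank_one.symm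
    _ = (U * V * 1).rank := (Matrix.rank_mul_eq_right_of_isUpperTriangular _ _ hUV hdiag).symm
    _ = (U * V).rank := by rw [Matrix.mul_one]
    _ ≤ U.rank := Matrix.rank_mul_le_left _ _
    _ ≤ Fintype.card ι := Matrix.rank_le_card_width _

def Sym.ofFn {α : Type*} {n : ℕ} (f : Fin n → α) : Sym α n :=
  ⟨Multiset.map f univ.val, by simp⟩

theorem prod_sum_mul_eq_sum_sym {R κ : Type*} [CommSemiring R] [Fintype κ] [DecidableEq κ]
    {a : ℕ} (c : κ → R) (f : Fin a → κ → R) :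
    ∏ m, ∑ d, c d * f m d =
      ∑ σ : Sym κ a, ((σ : Multiset κ).map c).prod *
        ∑ D : Fin a → κ with Sym.ofFn D = σ, ∏ m, f m (D m) := by
  rw [Fintype.prod_sum, ← sum_fiberwise univ Sym.ofFn]
  refine sum_congr rfl fun σ _ => ?_
  rw [mul_sum]
  refine sum_congr rfl fun D hD => ?_
  rw [← (mem_filter.1 hD).2, prod_mul_distrib]
  simp only [Sym.ofFn, Sym.coe_mk, Multiset.map_map]
  rfl

theorem card_le_choose_of_prod_eval_isUpperTriangular {R : Type*} [Field R] {N a b : ℕ}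
    (P : Fin N → R[X]) (hP : ∀ i, (P i).natDegree ≤ b) (y : Fin N → Fin a → R)
    (hzero : ∀ i j, j < i → ∏ m, (P i).eval (y j m) = 0)
    (hdiag : ∀ i, ∏ m, (P i).eval (y i m) ≠ 0) :
    N ≤ (a + b).choose a := by
  let U : Matrix (Fin N) (Sym (Fin (b + 1)) a) R := fun i σ =>
    ((σ : Multiset (Fin (b + 1))).map fun d : Fin (b + 1) => (P i).coeff d).prod
  let V : Matrix (Sym (Fin (b + 1)) a) (Fin N) R := fun σ j =>
    ∑ D : Fin a → Fin (b + 1) with Sym.ofFn D = σ, ∏ m, y j m ^ (D m : ℕ)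
  have hUV : ∀ i j, (U * V) i j = ∏ m, (P i).eval (y j m) := by
    intro i j
    calc (U * V) i j = ∏ m, ∑ d : Fin (b + 1), (P i).coeff d * y j m ^ (d : ℕ) := by
          rw [Matrix.mul_apply]
          exact (prod_sum_mul_eq_sum_sym (fun d : Fin (b + 1) => (P i).coeff d)
            fun m d => y j m ^ (d : ℕ)).symm
      _ = ∏ m, (P i).eval (y j m) := by
          refine prod_congr rfl fun m _ => ?_
          rw [eval_eq_sum_range' (Nat.lt_succ_of_le (hP i)), ← Fin.sum_univ_eq_sum_range]
  have hcard := Matrix.card_le_card_of_isUpperTriangular_mul U V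
    (fun i j hji => (hUV i j).trans (hzero i j hji)) (fun i => (hUV i i).trans_ne (hdiag i))
  rwa [Fintype.card_fin, Sym.card_sym_eq_choose, Fintype.card_fin, Nat.add_right_comm,
    Nat.add_sub_cancel, add_comm b] at hcard

theorem Finset.exists_fin_tuple_of_card_le {R : Type*} [Zero R] {a : ℕ} (s : Finset R)
    (hs : #s ≤ a) : ∃ y : Fin a → R, ↑s ⊆ Set.range y ∧ Set.range y ⊆ insert 0 ↑s := by
  refine ⟨fun m => if h : (m : ℕ) < #s then s.equivFin.symm ⟨m, h⟩ else 0, fun x hx => ?_, ?_⟩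
  · exact ⟨Fin.castLE hs (s.equivFin ⟨x, hx⟩), by simp⟩
  · rintro _ ⟨m, rfl⟩
    dsimp only
    split_ifs
    · exact Set.mem_insert_of_mem _ (coe_mem _)
    · exact Set.mem_insert _ _

theorem card_le_choose_of_skew_crossIntersecting {α : Type*} [DecidableEq α] [Countable α]
    {N a b : ℕ} (A B : Fin N → Finset α) (hA : ∀ i, #(A i) ≤ a) (hB : ∀ i, #(B i) ≤ b)
    (hdisj : ∀ i, Disjoint (A i) (B i)) (hskew : ∀ i j, j < i → ¬Disjoint (A j) (B i)) :
    N ≤ (a + b).choose a := by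
  obtain ⟨f, hf⟩ := Countable.exists_injective_nat α
  -- `t` is injective and misses `0`, the value padding the tuples `y j` below.
  let t : α → ℝ := fun x => f x + 1
  have ht : Function.Injective t := fun x z h => hf (by simpa [t] using h)
  have ht0 : ∀ x, t x ≠ 0 := fun x => by positivity
  choose y hyA hyA' using fun j =>
    ((A j).image t).exists_fin_tuple_of_card_le (card_image_le.trans (hA j))
  let P : Fin N → ℝ[X] := fun i => ∏ z ∈ B i, (X - C (t z))
  have hroot : ∀ i x, (P i).eval x = 0 ↔ ∃ z ∈ B i, x = t z := by
    intro i x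
    rw [eval_prod, prod_eq_zero_iff]
    simp only [eval_sub, eval_X, eval_C, sub_eq_zero]
  refine card_le_choose_of_prod_eval_isUpperTriangular P (fun i => ?_) y (fun i j hji => ?_)
    (fun i => prod_ne_zero_iff.2 fun m _ => ?_)
  · simpa [P, natDegree_prod_of_monic _ _ fun z _ => monic_X_sub_C (t z)] using hB i
  · obtain ⟨w, hwA, hwB⟩ := not_disjoint_iff.1 (hskew i j hji)
    obtain ⟨m, hm⟩ := hyA j (mem_coe.2 (mem_image_of_mem t hwA))
    exact prod_eq_zero (mem_univ m) ((hroot i _).2 ⟨w, hwB, hm⟩)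
  · intro h
    obtain ⟨z, hzB, hz⟩ := (hroot i _).1 h
    rcases hyA' i ⟨m, rfl⟩ with h0 | hA'
    · exact ht0 z (hz.symm.trans h0)
    · obtain ⟨w, hwA, hw⟩ := mem_image.1 (mem_coe.1 hA')
      exact disjoint_left.1 (hdisj i) hwA (ht (hw.trans hz) ▸ hzB)

def Coverable (n r s : ℕ) : Prop :=
  ∃ F : Finset (Finset (Fin n) × Finset (Fin n)), TriCover n F ∧
    (∀ i : Fin n, rowVal F i ≤ r) ∧ ∀ j : Fin n, colVal F j ≤ s

theorem Coverable.le_choose {n r s : ℕ} (h : Coverable (n + 1) r s) : n ≤ (r + s).choose r := by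
  obtain ⟨F, ⟨hones, hcover⟩, hrow, hcol⟩ := h
  rw [add_comm, ← Nat.choose_symm_add]
  refine card_le_choose_of_skew_crossIntersecting
    (α := Finset (Fin (n + 1)) × Finset (Fin (n + 1))) (fun j => {p ∈ F | j.succ ∈ p.2})
    (fun i => {p ∈ F | i.castSucc ∈ p.1}) (fun j => hcol j.succ) (fun i => hrow i.castSucc)
    (fun i => disjoint_filter.2 fun p hp hcol hrow => ?_) fun i j hji => ?_
  · simpa using hones p hp _ hrow _ hcol
  · obtain ⟨p, hp, hi, hj⟩ := hcover i.castSucc j.succ (by simpa using hji)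
    exact not_disjoint_iff.2 ⟨p, mem_filter.2 ⟨hp, hj⟩, mem_filter.2 ⟨hp, hi⟩⟩

section Valency

variable {n : ℕ} (F G : Finset (Finset (Fin n) × Finset (Fin n)))
  (P : Finset (Fin n) × Finset (Fin n)) (k : Fin n)

theorem rowVal_union_le : rowVal (F ∪ G) k ≤ rowVal F k + rowVal G k := by
  rw [rowVal, filter_union]
  exact card_union_le _ _

theorem colVal_union_le : colVal (F ∪ G) k ≤ colVal F k + colVal G k := by
  rw [colVal, filter_union]
  exact card_union_le _ _

theorem rowVal_insert_le : rowVal (insert P F) k ≤ rowVal F k + if k ∈ P.1 then 1 else 0 := by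
  rw [rowVal, filter_insert]
  split_ifs
  · exact card_insert_le _ _
  · rfl

theorem colVal_insert_le : colVal (insert P F) k ≤ colVal F k + if k ∈ P.2 then 1 else 0 := by
  rw [colVal, filter_insert]
  split_ifs
  · exact card_insert_le _ _
  · rfl

end Valency

def rectMap {m n : ℕ} (e : Fin m ↪ Fin n) :
    Finset (Fin m) × Finset (Fin m) ↪ Finset (Fin n) × Finset (Fin n) :=
  (mapEmbedding e).toEmbedding.prodMap (mapEmbedding e).toEmbedding

section rectMap

variable {m n : ℕ} (e : Fin m ↪ Fin n) (F : Finset (Finset (Fin m) × Finset (Fin m)))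

theorem rowVal_map_apply (i : Fin m) : rowVal (F.map (rectMap e)) (e i) = rowVal F i := by
  simp [rowVal, filter_map, rectMap, Function.comp_def]

theorem colVal_map_apply (j : Fin m) : colVal (F.map (rectMap e)) (e j) = colVal F j := by
  simp [colVal, filter_map, rectMap, Function.comp_def]

theorem rowVal_map_of_notMem_range {k : Fin n} (hk : k ∉ Set.range e) :
    rowVal (F.map (rectMap e)) k = 0 := by
  simp_all [rowVal, filter_map, rectMap, Function.comp_def]

theorem colVal_map_of_notMem_range {k : Fin n} (hk : k ∉ Set.range e) :
    colVal (F.map (rectMap e)) k = 0 := by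
  simp_all [colVal, filter_map, rectMap, Function.comp_def]

theorem rowVal_map_le {r : ℕ} (hF : ∀ i, rowVal F i ≤ r) (k : Fin n) :
    rowVal (F.map (rectMap e)) k ≤ r := by
  by_cases hk : k ∈ Set.range e
  · obtain ⟨i, rfl⟩ := hk
    exact (rowVal_map_apply e F i).trans_le (hF i)
  · exact (rowVal_map_of_notMem_range e F hk).trans_le (Nat.zero_le r)

theorem colVal_map_le {s : ℕ} (hF : ∀ j, colVal F j ≤ s) (k : Fin n) :
    colVal (F.map (rectMap e)) k ≤ s := by
  by_cases hk : k ∈ Set.range e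
  · obtain ⟨j, rfl⟩ := hk
    exact (colVal_map_apply e F j).trans_le (hF j)
  · exact (colVal_map_of_notMem_range e F hk).trans_le (Nat.zero_le s)

end rectMap

section TriCover

variable {m n : ℕ} {F : Finset (Finset (Fin m) × Finset (Fin m))} (e : Fin m ↪o Fin n)

theorem TriCover.le_of_mem_map (hF : TriCover m F) {P : Finset (Fin n) × Finset (Fin n)}
    (hP : P ∈ F.map (rectMap e.toEmbedding)) {k l : Fin n} (hk : k ∈ P.1) (hl : l ∈ P.2) :
    (l : ℕ) ≤ (k : ℕ) := by
  obtain ⟨Q, hQ, rfl⟩ := mem_map.1 hP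
  obtain ⟨i, hi, rfl⟩ := mem_map.1 hk
  obtain ⟨j, hj, rfl⟩ := mem_map.1 hl
  exact e.le_iff_le.2 (hF.1 Q hQ i hi j hj)

theorem TriCover.exists_mem_map (hF : TriCover m F) {i j : Fin m} (hji : (j : ℕ) ≤ (i : ℕ)) :
    ∃ P ∈ F.map (rectMap e.toEmbedding), e i ∈ P.1 ∧ e j ∈ P.2 := by
  obtain ⟨Q, hQ, hi, hj⟩ := hF.2 i j hji
  exact ⟨rectMap e.toEmbedding Q, mem_map_of_mem _ hQ, mem_map_of_mem _ hi, mem_map_of_mem _ hj⟩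

end TriCover

theorem Fin.notMem_range_castLEOrderEmb {p n : ℕ} (h : p ≤ n) {k : Fin n} (hk : p ≤ (k : ℕ)) :
    k ∉ Set.range (Fin.castLEOrderEmb h) := by
  rintro ⟨i, rfl⟩
  exact lt_irrefl _ (i.2.trans_le hk)

theorem Fin.notMem_range_natAddOrderEmb {p q : ℕ} {k : Fin (p + q)} (hk : (k : ℕ) < p) :
    k ∉ Set.range (Fin.natAddOrderEmb p) := by
  rintro ⟨i, rfl⟩
  simp only [Fin.natAddOrderEmb_apply, Fin.val_natAdd] at hk
  omega

def pivotRect (p q : ℕ) : Finset (Fin (p + 1 + q)) × Finset (Fin (p + 1 + q)) :=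
  (univ.filter fun k : Fin (p + 1 + q) => p ≤ (k : ℕ),
    univ.filter fun l : Fin (p + 1 + q) => (l : ℕ) ≤ p)

@[simp]
theorem mem_pivotRect_fst {p q : ℕ} {k : Fin (p + 1 + q)} :
    k ∈ (pivotRect p q).1 ↔ p ≤ (k : ℕ) := by
  simp [pivotRect]

@[simp]
theorem mem_pivotRect_snd {p q : ℕ} {l : Fin (p + 1 + q)} :
    l ∈ (pivotRect p q).2 ↔ (l : ℕ) ≤ p := by
  simp [pivotRect]

section blockCover

variable {p q : ℕ} (FT : Finset (Finset (Fin p) × Finset (Fin p)))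
  (FB : Finset (Finset (Fin q) × Finset (Fin q)))

def blockCover : Finset (Finset (Fin (p + 1 + q)) × Finset (Fin (p + 1 + q))) :=
  insert (pivotRect p q)
    (FT.map (rectMap (Fin.castLEOrderEmb (by omega : p ≤ p + 1 + q)).toEmbedding) ∪
      FB.map (rectMap (Fin.natAddOrderEmb (p + 1)).toEmbedding))

theorem triCover_blockCover (hT : TriCover p FT) (hB : TriCover q FB) :
    TriCover (p + 1 + q) (blockCover FT FB) := by
  refine ⟨fun P hP k hk l hl => ?_, fun k l hlk => ?_⟩
  · rcases mem_insert.1 hP with rfl | hP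
    · rw [mem_pivotRect_fst] at hk
      rw [mem_pivotRect_snd] at hl
      omega
    rcases mem_union.1 hP with hP | hP
    · exact hT.le_of_mem_map _ hP hk hl
    · exact hB.le_of_mem_map _ hP hk hl
  by_cases hk : (k : ℕ) < p
  · obtain ⟨P, hP, hkP, hlP⟩ := hT.exists_mem_map (Fin.castLEOrderEmb (by omega : p ≤ p + 1 + q))
      (i := ⟨k, hk⟩) (j := ⟨l, by omega⟩) hlk
    exact ⟨P, mem_insert_of_mem (mem_union_left _ hP), hkP, hlP⟩
  by_cases hl : p < (l : ℕ)
  · obtain ⟨P, hP, hkP, hlP⟩ := hB.exists_mem_map (Fin.natAddOrderEmb (p + 1))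
      (i := ⟨k - (p + 1), by omega⟩) (j := ⟨l - (p + 1), by omega⟩) (Nat.sub_le_sub_right hlk _)
    have hk' : Fin.natAddOrderEmb (p + 1) ⟨k - (p + 1), by omega⟩ = k :=
      Fin.ext (Nat.add_sub_cancel' (by omega))
    have hl' : Fin.natAddOrderEmb (p + 1) ⟨l - (p + 1), by omega⟩ = l :=
      Fin.ext (Nat.add_sub_cancel' (by omega))
    exact ⟨P, mem_insert_of_mem (mem_union_right _ hP), hk' ▸ hkP, hl' ▸ hlP⟩
  · exact ⟨_, mem_insert_self _ _, mem_pivotRect_fst.2 (by omega),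
      mem_pivotRect_snd.2 (by omega)⟩

theorem rowVal_blockCover_le {r : ℕ} (hT : ∀ i, rowVal FT i ≤ r + 1)
    (hB : ∀ i, rowVal FB i ≤ r) (k : Fin (p + 1 + q)) :
    rowVal (blockCover FT FB) k ≤ r + 1 := by
  refine (rowVal_insert_le _ _ k).trans
    ((Nat.add_le_add_right (rowVal_union_le _ _ k) _).trans ?_)
  by_cases hk : (k : ℕ) < p
  · rw [rowVal_map_of_notMem_range _ FB (Fin.notMem_range_natAddOrderEmb (by omega)),
      if_neg (mt mem_pivotRect_fst.1 (not_le.2 hk)), add_zero, add_zero]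
    exact rowVal_map_le _ FT hT k
  · rw [rowVal_map_of_notMem_range _ FT (Fin.notMem_range_castLEOrderEmb _ (not_lt.1 hk)),
      zero_add]
    exact Nat.add_le_add (rowVal_map_le _ FB hB k) (by split_ifs <;> omega)

theorem colVal_blockCover_le {s : ℕ} (hT : ∀ j, colVal FT j ≤ s)
    (hB : ∀ j, colVal FB j ≤ s + 1) (l : Fin (p + 1 + q)) :
    colVal (blockCover FT FB) l ≤ s + 1 := by
  refine (colVal_insert_le _ _ l).trans
    ((Nat.add_le_add_right (colVal_union_le _ _ l) _).trans ?_)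
  by_cases hl : p < (l : ℕ)
  · rw [colVal_map_of_notMem_range _ FT (Fin.notMem_range_castLEOrderEmb _ hl.le),
      if_neg (mt mem_pivotRect_snd.1 (not_le.2 hl)), zero_add, add_zero]
    exact colVal_map_le _ FB hB l
  · rw [colVal_map_of_notMem_range _ FB (Fin.notMem_range_natAddOrderEmb (by omega)),
      add_zero]
    exact Nat.add_le_add (colVal_map_le _ FT hT l) (by split_ifs <;> omega)

end blockCover

theorem coverable_zero (r s : ℕ) : Coverable 0 r s :=
  ⟨∅, ⟨by simp, fun i => i.elim0⟩, fun i => i.elim0, fun j => j.elim0⟩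

theorem Coverable.add {p q r s : ℕ} (hp : Coverable p (r + 1) s) (hq : Coverable q r (s + 1)) :
    Coverable (p + 1 + q) (r + 1) (s + 1) := by
  obtain ⟨FT, hFT, hrowT, hcolT⟩ := hp
  obtain ⟨FB, hFB, hrowB, hcolB⟩ := hq
  exact ⟨blockCover FT FB, triCover_blockCover FT FB hFT hFB,
    rowVal_blockCover_le FT FB hrowT hrowB, colVal_blockCover_le FT FB hcolT hcolB⟩

theorem coverable_of_lt_choose : ∀ {n r s : ℕ}, n < (r + s).choose r → Coverable n r s
  | 0, r, s, _ => coverable_zero r s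
  | n + 1, 0, s, h => by simp at h
  | n + 1, r + 1, 0, h => by simp at h
  | n + 1, r + 1, s + 1, h => by
    have hpascal : (r + 1 + (s + 1)).choose (r + 1) =
        (r + 1 + s).choose (r + 1) + (r + (s + 1)).choose r := by
      show (r + 1 + s + 1).choose (r + 1) = _
      rw [Nat.choose_succ_succ', Nat.add_right_comm r 1 s]
      exact add_comm _ _
    have htop : 0 < (r + 1 + s).choose (r + 1) := Nat.choose_pos (by omega)
    have hbot : 0 < (r + (s + 1)).choose r := Nat.choose_pos (by omega)
    obtain ⟨p, q, hpq, hp, hq⟩ : ∃ p q, p + 1 + q = n + 1 ∧ p < (r + 1 + s).choose (r + 1) ∧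
        q < (r + (s + 1)).choose r :=
      ⟨min n ((r + 1 + s).choose (r + 1) - 1), n - min n ((r + 1 + s).choose (r + 1) - 1),
        by omega, by omega, by omega⟩
    exact hpq ▸ (coverable_of_lt_choose hp).add (coverable_of_lt_choose hq)
termination_by n => n

namespace Nat

theorem centralBinom_sq_mul_le_sixteen_pow (k : ℕ) :
    k.centralBinom ^ 2 * (2 * k + 1) ≤ 16 ^ k := by
  induction k with
  | zero => simp
  | succ k ih =>
    refine Nat.le_of_mul_le_mul_left ?_ (by positivity : 0 < (k + 1) ^ 2)
    calc (k + 1) ^ 2 * ((k + 1).centralBinom ^ 2 * (2 * (k + 1) + 1))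
        = (2 * (2 * k + 1) * k.centralBinom) ^ 2 * (2 * k + 3) := by
          rw [← succ_mul_centralBinom_succ]; ring
      _ = (4 * (2 * k + 1) * (2 * k + 3)) * (k.centralBinom ^ 2 * (2 * k + 1)) := by ring
      _ ≤ (16 * (k + 1) ^ 2) * 16 ^ k := Nat.mul_le_mul (by nlinarith) ih
      _ = (k + 1) ^ 2 * 16 ^ (k + 1) := by ring

theorem sixteen_pow_le_centralBinom_sq_mul {k : ℕ} (hk : 0 < k) :
    16 ^ k ≤ k.centralBinom ^ 2 * (4 * k) := by
  induction k with
  | zero => omega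
  | succ k ih =>
    rcases Nat.eq_zero_or_pos k with rfl | hk
    · decide
    refine Nat.le_of_mul_le_mul_left ?_ (by positivity : 0 < (k + 1) ^ 2)
    calc (k + 1) ^ 2 * 16 ^ (k + 1)
        = (16 * (k + 1) ^ 2) * 16 ^ k := by ring
      _ ≤ (16 * (k + 1) ^ 2) * (k.centralBinom ^ 2 * (4 * k)) := Nat.mul_le_mul_left _ (ih hk)
      _ ≤ (2 * k + 1) ^ 2 * (k.centralBinom ^ 2 * (16 * (k + 1))) := by
          have : 4 * k * (k + 1) ≤ (2 * k + 1) ^ 2 := by nlinarith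
          nlinarith [Nat.zero_le (k.centralBinom ^ 2 * (16 * (k + 1)))]
      _ = (2 * (2 * k + 1) * k.centralBinom) ^ 2 * (4 * (k + 1)) := by ring
      _ = (k + 1) ^ 2 * ((k + 1).centralBinom ^ 2 * (4 * (k + 1))) := by
          rw [← succ_mul_centralBinom_succ]; ring

end Nat

theorem coverable_lrB (n : ℕ) : Coverable n (lrB n) (lrB n) := by
  refine Nat.sInf_mem (s := {k | Coverable n k k}) ⟨n, coverable_of_lt_choose ?_⟩
  rw [← two_mul, ← Nat.centralBinom_eq_two_mul_choose]
  exact Nat.lt_of_succ_le (Nat.le_of_dvd n.centralBinom_pos n.succ_dvd_centralBinom)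

theorem lrB_le_of_lt_centralBinom {n k : ℕ} (h : n < k.centralBinom) : lrB n ≤ k := by
  refine Nat.sInf_le (coverable_of_lt_choose ?_)
  rwa [← two_mul, ← Nat.centralBinom_eq_two_mul_choose]

theorem le_centralBinom_lrB_add_one (n : ℕ) : n ≤ (lrB n).centralBinom + 1 := by
  rcases n with _ | n
  · exact Nat.zero_le _
  · have := (coverable_lrB (n + 1)).le_choose
    rw [← two_mul, ← Nat.centralBinom_eq_two_mul_choose] at this
    omega

theorem sq_mul_le_two_pow_lrB (n : ℕ) : n ^ 2 * (2 * lrB n + 1) ≤ 2 ^ (4 * lrB n + 2) := by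
  have hn := le_centralBinom_lrB_add_one n
  set K := lrB n
  replace hn : n ≤ 2 * K.centralBinom := hn.trans (by have := K.centralBinom_pos; omega)
  calc n ^ 2 * (2 * K + 1) ≤ (2 * K.centralBinom) ^ 2 * (2 * K + 1) :=
        Nat.mul_le_mul_right _ (Nat.pow_le_pow_left hn 2)
    _ = 4 * (K.centralBinom ^ 2 * (2 * K + 1)) := by ring
    _ ≤ 4 * 16 ^ K := Nat.mul_le_mul_left _ (Nat.centralBinom_sq_mul_le_sixteen_pow K)
    _ = 2 ^ (4 * K + 2) := by rw [pow_add, pow_mul]; ring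

theorem lrB_le_of_sq_mul_lt_two_pow {n k : ℕ} (hk : 0 < k)
    (h : n ^ 2 * (4 * k) < 2 ^ (4 * k)) : lrB n ≤ k := by
  refine lrB_le_of_lt_centralBinom ((Nat.pow_lt_pow_iff_left two_ne_zero).1
    (Nat.lt_of_mul_lt_mul_right (a := 4 * k) (h.trans_le ?_)))
  rw [pow_mul]
  exact Nat.sixteen_pow_le_centralBinom_sq_mul hk

open Real

theorem one_le_logb_two_natCast {n : ℕ} (hn : 2 ≤ n) : 1 ≤ logb 2 (n : ℝ) := by
  rw [← logb_self_eq_one one_lt_two]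
  exact logb_le_logb_of_le one_lt_two two_pos (by exact_mod_cast hn)

theorem logb_two_le_self {x : ℝ} (hx : 1 ≤ x) : logb 2 x ≤ x := by
  rw [logb_le_iff_le_rpow one_lt_two (by positivity)]
  have := one_add_mul_self_le_rpow_one_add (s := 1) (by norm_num) hx
  norm_num at this
  linarith

theorem lrB_lower_bound {n : ℕ} (hn : 2 ≤ n) :
    1 / 2 * logb 2 n + 1 / 4 * logb 2 (logb 2 n) - 1 / 2 ≤ lrB n := by
  set K := lrB n
  have hL := one_le_logb_two_natCast hn
  have hK : (1 : ℝ) ≤ 2 * K + 1 := by linarith [K.cast_nonneg (α := ℝ)]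
  have hlog : 2 * logb 2 n + logb 2 (2 * K + 1) ≤ 4 * K + 2 := by
    have h : (n : ℝ) ^ 2 * (2 * K + 1) ≤ 2 ^ (4 * K + 2) := by
      exact_mod_cast sq_mul_le_two_pow_lrB n
    have := logb_le_logb_of_le one_lt_two (by positivity) h
    rw [logb_mul (by positivity) (by positivity), logb_pow, logb_pow,
      logb_self_eq_one one_lt_two] at this
    push_cast at this
    linarith
  have hLK : logb 2 (logb 2 n) ≤ logb 2 (2 * K + 1) :=
    logb_le_logb_of_le one_lt_two (by positivity) (by linarith [logb_nonneg one_lt_two hK])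
  linarith

theorem lrB_upper_bound {n : ℕ} (hn : 2 ≤ n) :
    (lrB n : ℝ) ≤ 1 / 2 * logb 2 n + 1 / 4 * logb 2 (logb 2 n) + 3 := by
  set L := logb 2 (n : ℝ) with hL_def
  have hL : 1 ≤ L := one_le_logb_two_natCast hn
  have hLL := logb_two_le_self hL
  set x := 1 / 2 * L + 1 / 4 * logb 2 L with hx_def
  have hx : 0 ≤ x := by have := logb_nonneg one_lt_two hL; positivity
  -- `k = x + O(1)` is just large enough for `n² · 4k < 16 ^ k`, i.e. for `n < C(2k, k)`.
  set k := ⌈x⌉₊ + 2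
  have hkx : x + 2 ≤ k := by have := Nat.le_ceil x; push_cast [k]; linarith
  have hxk : (k : ℝ) < x + 3 := by have := Nat.ceil_lt_add_one hx; push_cast [k]; linarith
  have hk : logb 2 k ≤ 2 + logb 2 L :=
    calc logb 2 k ≤ logb 2 (2 ^ 2 * L) :=
          logb_le_logb_of_le one_lt_two (by positivity) (by linarith)
      _ = 2 + logb 2 L := by
          rw [logb_mul (by positivity) (by positivity), logb_pow, logb_self_eq_one one_lt_two]
          ring
  have hlt : n ^ 2 * (4 * k) < 2 ^ (4 * k) := by
    have : logb 2 ((n : ℝ) ^ 2 * (2 ^ 2 * k)) < (4 * k : ℕ) := by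
      rw [logb_mul (by positivity) (by positivity), logb_mul (by positivity) (by positivity),
        logb_pow, logb_pow, logb_self_eq_one one_lt_two]
      push_cast
      linarith
    rw [logb_lt_iff_lt_rpow one_lt_two (by positivity), rpow_natCast] at this
    exact_mod_cast this
  have : (lrB n : ℝ) ≤ k := by exact_mod_cast lrB_le_of_sq_mul_lt_two_pow (by omega) hlt
  linarith

theorem stmt17 : ∃ c₁ c₂ : ℝ, ∀ n : ℕ, 2 ≤ n →
    (1 / 2 : ℝ) * Real.logb 2 (n : ℝ) +
        (1 / 4 : ℝ) * Real.logb 2 (Real.logb 2 (n : ℝ)) - c₁ ≤ (lrB n : ℝ) ∧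
      (lrB n : ℝ) ≤ (1 / 2 : ℝ) * Real.logb 2 (n : ℝ) +
        (1 / 4 : ℝ) * Real.logb 2 (Real.logb 2 (n : ℝ)) + c₂ :=
  ⟨1 / 2, 3, fun _ hn => ⟨lrB_lower_bound hn, lrB_upper_bound hn⟩⟩
end
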